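/- arXiv:1908.01905 — 5 statements merged into one kernel-verified Lean document; each statement's English description precedes it below -/
import Mathlib

section
/- For every smooth function f : ℝ³∖{0} → ℂ and every x ≠ 0, the mixed commutation relations [Lᵢ,Rⱼ]f(x) = −ε_{ijk}R_kf(x) hold for all i,j ∈ {1,2,3}, where ε_{ijk} is the Levi-Civita symbol (so in particular [Lᵢ,Rᵢ]f = 0, and e.g. [L₁,R₂]f = −R₃f, [L₂,R₁]f = R₃f, cyclically), with [A,B] the commutator A∘B − B∘A. -/
noncomputable section

/-- Euclidean 3-space. -/
abbrev E3 : Type := EuclideanSpace ℝ (Fin 3)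

/-- The `i`-th partial derivative of a complex-valued function on `E3`. -/
def pd (i : Fin 3) (f : E3 → ℂ) (x : E3) : ℂ :=
  fderiv ℝ f x (EuclideanSpace.single i 1)


-- ### Auxiliary machinery ###

def Sm (u : E3 → ℂ) : Prop := ∀ y : E3, y ≠ 0 → ContDiffAt ℝ (⊤ : ℕ∞) u y

lemma Sm.pd {u : E3 → ℂ} (hu : Sm u) (i : Fin 3) : Sm (pd i u) := by
  intro y hy
  have h1 : ContDiffAt ℝ (⊤ : ℕ∞) (fderiv ℝ u) y := (hu y hy).fderiv_right (by simp)
  exact (ContinuousLinearMap.apply ℝ ℂ (EuclideanSpace.single i 1)).contDiff.contDiffAt.comp y h1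

lemma Sm.sub {u w : E3 → ℂ} (hu : Sm u) (hw : Sm w) : Sm (fun y => u y - w y) :=
  fun y hy => (hu y hy).sub (hw y hy)

lemma Sm.add {u w : E3 → ℂ} (hu : Sm u) (hw : Sm w) : Sm (fun y => u y + w y) :=
  fun y hy => (hu y hy).add (hw y hy)

lemma Sm.constMul {u : E3 → ℂ} (hu : Sm u) (c : ℂ) : Sm (fun y => c * u y) :=
  fun y hy => contDiffAt_const.mul (hu y hy)

lemma coord_contDiff (c : Fin 3) : ContDiff ℝ (⊤ : ℕ∞) (fun y : E3 => ((y c : ℝ) : ℂ)) :=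
  Complex.ofRealCLM.contDiff.comp (EuclideanSpace.proj c : E3 →L[ℝ] ℝ).contDiff

lemma Sm.coordMul {u : E3 → ℂ} (hu : Sm u) (c : Fin 3) :
    Sm (fun y => ((y c : ℝ) : ℂ) * u y) :=
  fun y hy => ((coord_contDiff c).contDiffAt).mul (hu y hy)

lemma Sm.rhoMul {u : E3 → ℂ} (hu : Sm u) (γ : ℝ) (c : Fin 3) :
    Sm (fun y => ((γ * y c / ‖y‖ : ℝ) : ℂ) * u y) := by
  intro y hy
  have hρ : ContDiffAt ℝ (⊤ : ℕ∞) (fun y : E3 => (γ * y c / ‖y‖ : ℝ)) y := by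
    apply ContDiffAt.div
    · exact (contDiffAt_const.mul ((EuclideanSpace.proj c : E3 →L[ℝ] ℝ).contDiff.contDiffAt))
    · exact contDiffAt_norm ℝ hy
    · exact norm_ne_zero_iff.2 hy
  exact (Complex.ofRealCLM.contDiff.contDiffAt.comp y hρ).mul (hu y hy)

lemma Sm.diffAt {u : E3 → ℂ} (hu : Sm u) {x : E3} (hx : x ≠ 0) :
    DifferentiableAt ℝ u x := (hu x hx).differentiableAt (by simp)

lemma pd_congr {u w : E3 → ℂ} {x : E3} (h : u =ᶠ[nhds x] w) (i : Fin 3) :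
    pd i u x = pd i w x := by
  unfold pd; rw [h.fderiv_eq]

lemma eventually_ne_zero {x : E3} (hx : x ≠ 0) : ∀ᶠ y in nhds x, y ≠ 0 :=
  (isOpen_compl_singleton.eventually_mem hx)

lemma pd_swap {u : E3 → ℂ} {x : E3} (hu : ContDiffAt ℝ (⊤ : ℕ∞) u x) (i j : Fin 3) :
    pd i (pd j u) x = pd j (pd i u) x := by
  have hsymm := hu.isSymmSndFDerivAt (by rw [minSmoothness_of_isRCLikeNormedField]; exact WithTop.coe_le_coe.mpr le_top)
  have hder : DifferentiableAt ℝ (fderiv ℝ u) x :=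
    ((hu.fderiv_right (m := (⊤ : ℕ∞)) (by simp)).differentiableAt (by simp))
  have key : ∀ v w : E3, fderiv ℝ (fun y => fderiv ℝ u y v) x w
      = fderiv ℝ (fderiv ℝ u) x w v := by
    intro v w
    rw [fderiv_clm_apply hder (differentiableAt_const v)]
    simp
  show fderiv ℝ (fun y => fderiv ℝ u y (EuclideanSpace.single j 1)) x (EuclideanSpace.single i 1) = _
  rw [key, hsymm, ← key]
  rfl

lemma norm_hasFDerivAt {x : E3} (hx : x ≠ 0) :
    HasFDerivAt (fun y : E3 => ‖y‖) ((‖x‖⁻¹ : ℝ) • (innerSL ℝ x)) x := by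
  have hne : ‖x‖ ^ 2 ≠ 0 := pow_ne_zero 2 (norm_ne_zero_iff.2 hx)
  have h1 : HasFDerivAt (fun y : E3 => ‖y‖ ^ 2) (2 • innerSL ℝ x) x :=
    (hasStrictFDerivAt_norm_sq x).hasFDerivAt
  have h2 := (Real.hasDerivAt_sqrt hne).comp_hasFDerivAt x h1
  have h3 : ((fun x => Real.sqrt x) ∘ fun y : E3 => ‖y‖ ^ 2) = fun y : E3 => ‖y‖ := by
    funext y; simp [Function.comp, Real.sqrt_sq (norm_nonneg y)]
  rw [h3] at h2
  refine h2.congr_fderiv ?_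
  symm
  rw [Real.sqrt_sq (norm_nonneg x)]
  ext v
  simp [smul_smul]
  ring

lemma innerSL_single (x : E3) (i : Fin 3) : innerSL ℝ x (EuclideanSpace.single i 1) = x i := by
  simp [EuclideanSpace.inner_single_right]

-- raw first-order expansion lemmas
lemma Pcmul' {u : E3 → ℂ} {x : E3} (hu : DifferentiableAt ℝ u x) (c : ℂ) (i : Fin 3) :
    pd i (fun y => c * u y) x = c * pd i u x := by
  unfold pd
  rw [fderiv_const_mul hu]
  simp

lemma Psub' {u w : E3 → ℂ} {x : E3} (hu : DifferentiableAt ℝ u x)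
    (hw : DifferentiableAt ℝ w x) (i : Fin 3) :
    pd i (fun y => u y - w y) x = pd i u x - pd i w x := by
  unfold pd; rw [fderiv_fun_sub hu hw]; simp

lemma Padd' {u w : E3 → ℂ} {x : E3} (hu : DifferentiableAt ℝ u x)
    (hw : DifferentiableAt ℝ w x) (i : Fin 3) :
    pd i (fun y => u y + w y) x = pd i u x + pd i w x := by
  unfold pd; rw [fderiv_fun_add hu hw]; simp

lemma coord_hasFDerivAt (c : Fin 3) (x : E3) :
    HasFDerivAt (fun y : E3 => ((y c : ℝ) : ℂ))
      (Complex.ofRealCLM.comp (EuclideanSpace.proj c)) x :=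
  Complex.ofRealCLM.hasFDerivAt.comp x
    ((EuclideanSpace.proj c : E3 →L[ℝ] ℝ).hasFDerivAt (x := x))

lemma P1' {u : E3 → ℂ} {x : E3} (hu : DifferentiableAt ℝ u x) (i c : Fin 3) :
    pd i (fun y => ((y c : ℝ) : ℂ) * u y) x
      = (if i = c then 1 else 0) * u x + ((x c : ℝ) : ℂ) * pd i u x := by
  unfold pd
  rw [HasFDerivAt.fderiv (f := fun y : E3 => ((y c : ℝ) : ℂ) * u y)
    ((coord_hasFDerivAt c x).mul hu.hasFDerivAt)]
  simp [EuclideanSpace.single_apply]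
  rcases eq_or_ne i c with h | h
  · simp [h]; ring
  · rw [if_neg h, if_neg (fun hh : c = i => h hh.symm)]
    simp

lemma P5' {u : E3 → ℂ} {x : E3} (hx : x ≠ 0) (hu : DifferentiableAt ℝ u x) (γ : ℝ) (i c : Fin 3) :
    pd i (fun y => ((γ * y c / ‖y‖ : ℝ) : ℂ) * u y) x
      = ((γ * (if i = c then 1 else 0) / ‖x‖ - γ * x c * x i / ‖x‖ ^ 3 : ℝ) : ℂ) * u x
        + ((γ * x c / ‖x‖ : ℝ) : ℂ) * pd i u x := by
  have hne : ‖x‖ ≠ 0 := norm_ne_zero_iff.2 hx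
  have hnum : HasFDerivAt (fun y : E3 => γ * y c)
      (γ • (EuclideanSpace.proj c : E3 →L[ℝ] ℝ)) x :=
    ((EuclideanSpace.proj c : E3 →L[ℝ] ℝ).hasFDerivAt (x := x)).const_mul γ
  have hinv := (hasDerivAt_inv hne).comp_hasFDerivAt x (norm_hasFDerivAt hx)
  have hρ := hnum.mul hinv
  have hρC := Complex.ofRealCLM.hasFDerivAt.comp x hρ
  have hF := hρC.mul hu.hasFDerivAt
  have hfun : (fun y : E3 => ((γ * y c / ‖y‖ : ℝ) : ℂ) * u y)
      = fun y : E3 => ((γ * y c * (‖y‖)⁻¹ : ℝ) : ℂ) * u y := by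
    funext y; rw [div_eq_mul_inv]
  rw [hfun]
  unfold pd
  rw [HasFDerivAt.fderiv (𝕜 := ℝ) (f := fun y : E3 => ((γ * y c * (‖y‖)⁻¹ : ℝ) : ℂ) * u y) hF]
  simp only [Function.comp, ContinuousLinearMap.add_apply, ContinuousLinearMap.smul_apply,
    ContinuousLinearMap.comp_apply, ContinuousLinearMap.coe_smul', Pi.smul_apply,
    innerSL_single, Complex.ofRealCLM_apply, PiLp.proj_apply,
    EuclideanSpace.single_apply, smul_eq_mul, Complex.real_smul, Pi.mul_apply]
  push_cast
  rcases eq_or_ne i c with h | h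
  · simp only [h, if_pos rfl, ↓reduceIte]
    field_simp
    try ring
  · simp only [if_neg h, if_neg (fun hh : c = i => h hh.symm), Complex.ofReal_zero,
      mul_zero, zero_mul, add_zero]
    field_simp
    try ring

-- simp-friendly wrappers with Sm hypotheses
lemma Pcmul {u : E3 → ℂ} {x : E3} (hu : Sm u) (hx : x ≠ 0) (c : ℂ) (i : Fin 3) :
    pd i (fun y => c * u y) x = c * pd i u x := Pcmul' (hu.diffAt hx) c i

lemma Psub {u w : E3 → ℂ} {x : E3} (hu : Sm u) (hw : Sm w) (hx : x ≠ 0) (i : Fin 3) :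
    pd i (fun y => u y - w y) x = pd i u x - pd i w x :=
  Psub' (hu.diffAt hx) (hw.diffAt hx) i

lemma Padd {u w : E3 → ℂ} {x : E3} (hu : Sm u) (hw : Sm w) (hx : x ≠ 0) (i : Fin 3) :
    pd i (fun y => u y + w y) x = pd i u x + pd i w x :=
  Padd' (hu.diffAt hx) (hw.diffAt hx) i

lemma P1 {u : E3 → ℂ} {x : E3} (hu : Sm u) (hx : x ≠ 0) (i c : Fin 3) :
    pd i (fun y => ((y c : ℝ) : ℂ) * u y) x
      = (if i = c then 1 else 0) * u x + ((x c : ℝ) : ℂ) * pd i u x :=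
  P1' (hu.diffAt hx) i c

lemma P5 {u : E3 → ℂ} {x : E3} (hu : Sm u) (hx : x ≠ 0) (γ : ℝ) (i c : Fin 3) :
    pd i (fun y => ((γ * y c / ‖y‖ : ℝ) : ℂ) * u y) x
      = ((γ * (if i = c then 1 else 0) / ‖x‖ - γ * x c * x i / ‖x‖ ^ 3 : ℝ) : ℂ) * u x
        + ((γ * x c / ‖x‖ : ℝ) : ℂ) * pd i u x :=
  P5' hx (hu.diffAt hx) γ i c

-- second-order expansion lemmas
lemma Psub2 {u w : E3 → ℂ} {x : E3} (hu : Sm u) (hw : Sm w) (hx : x ≠ 0) (a b : Fin 3) :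
    pd a (pd b (fun y => u y - w y)) x = pd a (pd b u) x - pd a (pd b w) x := by
  have hev : pd b (fun y => u y - w y) =ᶠ[nhds x] fun y => pd b u y - pd b w y := by
    filter_upwards [eventually_ne_zero hx] with y hy
    exact Psub' (hu.diffAt hy) (hw.diffAt hy) b
  rw [pd_congr hev a, Psub' (((hu.pd b)).diffAt hx) (((hw.pd b)).diffAt hx) a]

lemma P1two {u : E3 → ℂ} {x : E3} (hu : Sm u) (hx : x ≠ 0) (a b c : Fin 3) :
    pd a (pd b (fun y => ((y c : ℝ) : ℂ) * u y)) x
      = (if b = c then 1 else 0) * pd a u x + (if a = c then 1 else 0) * pd b u x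
        + ((x c : ℝ) : ℂ) * pd a (pd b u) x := by
  have hev : pd b (fun y => ((y c : ℝ) : ℂ) * u y)
      =ᶠ[nhds x] fun y => (if b = c then (1:ℂ) else 0) * u y + ((y c : ℝ) : ℂ) * pd b u y := by
    filter_upwards [eventually_ne_zero hx] with y hy
    exact P1' (hu.diffAt hy) b c
  have hd1 : DifferentiableAt ℝ (fun y : E3 => (if b = c then (1:ℂ) else 0) * u y) x :=
    (hu.diffAt hx).const_mul _
  have hd2 : DifferentiableAt ℝ (fun y : E3 => ((y c : ℝ) : ℂ) * pd b u y) x :=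
    ((coord_contDiff c).differentiable (by simp) _).mul ((hu.pd b).diffAt hx)
  rw [pd_congr hev a, Padd' hd1 hd2 a, Pcmul' (hu.diffAt hx) _ a, P1' ((hu.pd b).diffAt hx) a c]
  ring

lemma pd_swap_inner {u : E3 → ℂ} {x : E3} (hu : Sm u) (hx : x ≠ 0) (a b c : Fin 3) :
    pd a (pd b (pd c u)) x = pd a (pd c (pd b u)) x := by
  have hev : pd b (pd c u) =ᶠ[nhds x] pd c (pd b u) := by
    filter_upwards [eventually_ne_zero hx] with y hy
    exact pd_swap (hu y hy) b c
  exact pd_congr hev a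


/-- Angular momentum operator `L₁ = x₂∂₃ − x₃∂₂` (0-indexed coordinates). -/
def L1 (f : E3 → ℂ) (x : E3) : ℂ := (x 1 : ℂ) * pd 2 f x - (x 2 : ℂ) * pd 1 f x

/-- Angular momentum operator `L₂ = x₃∂₁ − x₁∂₃`. -/
def L2 (f : E3 → ℂ) (x : E3) : ℂ := (x 2 : ℂ) * pd 0 f x - (x 0 : ℂ) * pd 2 f x

/-- Angular momentum operator `L₃ = x₁∂₂ − x₂∂₁`. -/
def L3 (f : E3 → ℂ) (x : E3) : ℂ := (x 0 : ℂ) * pd 1 f x - (x 1 : ℂ) * pd 0 f x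

/-- Runge–Lenz operator `R₁ = i(L₃∂₂ − L₂∂₃ − ∂₁ + γx₁/r)`. -/
def R1 (γ : ℝ) (f : E3 → ℂ) (x : E3) : ℂ :=
  Complex.I * (L3 (pd 1 f) x - L2 (pd 2 f) x - pd 0 f x + ((γ * x 0 / ‖x‖ : ℝ) : ℂ) * f x)

/-- Runge–Lenz operator `R₂ = i(L₁∂₃ − L₃∂₁ − ∂₂ + γx₂/r)`. -/
def R2 (γ : ℝ) (f : E3 → ℂ) (x : E3) : ℂ :=
  Complex.I * (L1 (pd 2 f) x - L3 (pd 0 f) x - pd 1 f x + ((γ * x 1 / ‖x‖ : ℝ) : ℂ) * f x)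

/-- Runge–Lenz operator `R₃ = i(L₂∂₁ − L₁∂₂ − ∂₃ + γx₃/r)`. -/
def R3 (γ : ℝ) (f : E3 → ℂ) (x : E3) : ℂ :=
  Complex.I * (L2 (pd 0 f) x - L1 (pd 1 f) x - pd 2 f x + ((γ * x 2 / ‖x‖ : ℝ) : ℂ) * f x)

set_option maxHeartbeats 4000000 in
/-- The mixed commutation relations `[Lᵢ,Rⱼ] = −ε_{ijk}R_k` between the angular momentum
and Runge–Lenz operators, on smooth functions on `ℝ³ ∖ {0}` (all nine equations). -/
theorem angular_momentum_runge_lenz_commutation_relations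
    (γ : ℝ) (hγ : 0 < γ)
    (f : E3 → ℂ) (hf : ContDiffOn ℝ (⊤ : ℕ∞) f {x : E3 | x ≠ 0})
    (x : E3) (hx : x ≠ 0) :
    L1 (R1 γ f) x - R1 γ (L1 f) x = 0 ∧
    L1 (R2 γ f) x - R2 γ (L1 f) x = -(R3 γ f x) ∧
    L1 (R3 γ f) x - R3 γ (L1 f) x = R2 γ f x ∧
    L2 (R1 γ f) x - R1 γ (L2 f) x = R3 γ f x ∧
    L2 (R2 γ f) x - R2 γ (L2 f) x = 0 ∧
    L2 (R3 γ f) x - R3 γ (L2 f) x = -(R1 γ f x) ∧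
    L3 (R1 γ f) x - R1 γ (L3 f) x = -(R2 γ f x) ∧
    L3 (R2 γ f) x - R2 γ (L3 f) x = R1 γ f x ∧
    L3 (R3 γ f) x - R3 γ (L3 f) x = 0 := by
  have hSm : Sm f := fun y hy => hf.contDiffAt (isOpen_ne.mem_nhds hy)
  have hL1e : L1 f = fun y => ((y 1 : ℝ) : ℂ) * pd 2 f y - ((y 2 : ℝ) : ℂ) * pd 1 f y := rfl
  have hL2e : L2 f = fun y => ((y 2 : ℝ) : ℂ) * pd 0 f y - ((y 0 : ℝ) : ℂ) * pd 2 f y := rfl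
  have hL3e : L3 f = fun y => ((y 0 : ℝ) : ℂ) * pd 1 f y - ((y 1 : ℝ) : ℂ) * pd 0 f y := rfl
  have hR1e : R1 γ f = fun y => Complex.I *
      (((y 0 : ℝ) : ℂ) * pd 1 (pd 1 f) y - ((y 1 : ℝ) : ℂ) * pd 0 (pd 1 f) y -
        (((y 2 : ℝ) : ℂ) * pd 0 (pd 2 f) y - ((y 0 : ℝ) : ℂ) * pd 2 (pd 2 f) y) -
        pd 0 f y + ((γ * y 0 / ‖y‖ : ℝ) : ℂ) * f y) := rfl
  have hR2e : R2 γ f = fun y => Complex.I *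
      (((y 1 : ℝ) : ℂ) * pd 2 (pd 2 f) y - ((y 2 : ℝ) : ℂ) * pd 1 (pd 2 f) y -
        (((y 0 : ℝ) : ℂ) * pd 1 (pd 0 f) y - ((y 1 : ℝ) : ℂ) * pd 0 (pd 0 f) y) -
        pd 1 f y + ((γ * y 1 / ‖y‖ : ℝ) : ℂ) * f y) := rfl
  have hR3e : R3 γ f = fun y => Complex.I *
      (((y 2 : ℝ) : ℂ) * pd 0 (pd 0 f) y - ((y 0 : ℝ) : ℂ) * pd 2 (pd 0 f) y -
        (((y 1 : ℝ) : ℂ) * pd 2 (pd 1 f) y - ((y 2 : ℝ) : ℂ) * pd 1 (pd 1 f) y) -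
        pd 2 f y + ((γ * y 2 / ‖y‖ : ℝ) : ℂ) * f y) := rfl
  have e10 : pd 1 (pd 0 f) x = pd 0 (pd 1 f) x := pd_swap (hSm x hx) 1 0
  have e20 : pd 2 (pd 0 f) x = pd 0 (pd 2 f) x := pd_swap (hSm x hx) 2 0
  have e21 : pd 2 (pd 1 f) x = pd 1 (pd 2 f) x := pd_swap (hSm x hx) 2 1
  have t010 : pd 0 (pd 1 (pd 0 f)) x = pd 0 (pd 0 (pd 1 f)) x := by
    rw [pd_swap_inner hSm hx 0 1 0]
  have t020 : pd 0 (pd 2 (pd 0 f)) x = pd 0 (pd 0 (pd 2 f)) x := by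
    rw [pd_swap_inner hSm hx 0 2 0]
  have t021 : pd 0 (pd 2 (pd 1 f)) x = pd 0 (pd 1 (pd 2 f)) x := by
    rw [pd_swap_inner hSm hx 0 2 1]
  have t100 : pd 1 (pd 0 (pd 0 f)) x = pd 0 (pd 0 (pd 1 f)) x := by
    rw [pd_swap ((hSm.pd 0) x hx) 1 0, pd_swap_inner hSm hx 0 1 0]
  have t101 : pd 1 (pd 0 (pd 1 f)) x = pd 0 (pd 1 (pd 1 f)) x := by
    rw [pd_swap ((hSm.pd 1) x hx) 1 0]
  have t102 : pd 1 (pd 0 (pd 2 f)) x = pd 0 (pd 1 (pd 2 f)) x := by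
    rw [pd_swap ((hSm.pd 2) x hx) 1 0]
  have t110 : pd 1 (pd 1 (pd 0 f)) x = pd 0 (pd 1 (pd 1 f)) x := by
    rw [pd_swap_inner hSm hx 1 1 0, pd_swap ((hSm.pd 1) x hx) 1 0]
  have t120 : pd 1 (pd 2 (pd 0 f)) x = pd 0 (pd 1 (pd 2 f)) x := by
    rw [pd_swap_inner hSm hx 1 2 0, pd_swap ((hSm.pd 2) x hx) 1 0]
  have t121 : pd 1 (pd 2 (pd 1 f)) x = pd 1 (pd 1 (pd 2 f)) x := by
    rw [pd_swap_inner hSm hx 1 2 1]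
  have t200 : pd 2 (pd 0 (pd 0 f)) x = pd 0 (pd 0 (pd 2 f)) x := by
    rw [pd_swap ((hSm.pd 0) x hx) 2 0, pd_swap_inner hSm hx 0 2 0]
  have t201 : pd 2 (pd 0 (pd 1 f)) x = pd 0 (pd 1 (pd 2 f)) x := by
    rw [pd_swap ((hSm.pd 1) x hx) 2 0, pd_swap_inner hSm hx 0 2 1]
  have t202 : pd 2 (pd 0 (pd 2 f)) x = pd 0 (pd 2 (pd 2 f)) x := by
    rw [pd_swap ((hSm.pd 2) x hx) 2 0]
  have t210 : pd 2 (pd 1 (pd 0 f)) x = pd 0 (pd 1 (pd 2 f)) x := by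
    rw [pd_swap ((hSm.pd 0) x hx) 2 1, pd_swap_inner hSm hx 1 2 0, pd_swap ((hSm.pd 2) x hx) 1 0]
  have t211 : pd 2 (pd 1 (pd 1 f)) x = pd 1 (pd 1 (pd 2 f)) x := by
    rw [pd_swap ((hSm.pd 1) x hx) 2 1, pd_swap_inner hSm hx 1 2 1]
  have t212 : pd 2 (pd 1 (pd 2 f)) x = pd 1 (pd 2 (pd 2 f)) x := by
    rw [pd_swap ((hSm.pd 2) x hx) 2 1]
  have t220 : pd 2 (pd 2 (pd 0 f)) x = pd 0 (pd 2 (pd 2 f)) x := by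
    rw [pd_swap_inner hSm hx 2 2 0, pd_swap ((hSm.pd 2) x hx) 2 0]
  have t221 : pd 2 (pd 2 (pd 1 f)) x = pd 1 (pd 2 (pd 2 f)) x := by
    rw [pd_swap_inner hSm hx 2 2 1, pd_swap ((hSm.pd 2) x hx) 2 1]
  refine ⟨?_, ?_, ?_, ?_, ?_, ?_, ?_, ?_, ?_⟩ <;>
  · simp (disch := first
        | assumption
        | (apply_rules [Sm.sub, Sm.add, Sm.constMul, Sm.coordMul, Sm.rhoMul, Sm.pd, hSm])) only
      [L1, L2, L3, R1, R2, R3, hR1e, hR2e, hR3e, hL1e, hL2e, hL3e,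
        Pcmul, Psub, Padd, P1, P5, Psub2, P1two]
    norm_num
    simp only [e10, e20, e21, t010, t020, t021, t100, t101, t102, t110, t120, t121,
      t200, t201, t202, t210, t211, t212, t220, t221]
    push_cast
    ring
end
end

section
/- For every smooth function f : ℝ³∖{0} → ℂ and every x ≠ 0, the Runge–Lenz operators satisfy [R₁,R₂]f(x) = T(L₃f)(x), [R₂,R₃]f(x) = T(L₁f)(x), and [R₃,R₁]f(x) = T(L₂f)(x), where [A,B] denotes the commutator A∘B − B∘A of operators. -/
noncomputable section

/-- The rescaled Schrödinger operator `T = −Δ − 2γ/r`. -/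
def Tsch (γ : ℝ) (f : E3 → ℂ) (x : E3) : ℂ :=
  -(pd 0 (pd 0 f) x + pd 1 (pd 1 f) x + pd 2 (pd 2 f) x) - ((2 * γ / ‖x‖ : ℝ) : ℂ) * f x


open Topology

namespace RL

def U : Set E3 := {x | x ≠ 0}

lemma isOpen_U : IsOpen U := isOpen_ne

def Sm (g : E3 → ℂ) : Prop := ContDiffOn ℝ (⊤ : ℕ∞) g U

lemma Sm.diffAt {g : E3 → ℂ} (hg : Sm g) {x : E3} (hx : x ∈ U) :
    DifferentiableAt ℝ g x :=
  (hg.contDiffAt (isOpen_U.mem_nhds hx)).differentiableAt (by simp)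

lemma Sm.pd {g : E3 → ℂ} (hg : Sm g) (i : Fin 3) : Sm (pd i g) := by
  have h := hg.fderiv_of_isOpen isOpen_U (m := ((⊤ : ℕ∞) : WithTop ℕ∞)) (by exact_mod_cast (le_top : (⊤ : ℕ∞) + 1 ≤ ⊤))
  exact h.clm_apply contDiffOn_const

lemma pd_congr_U {g h : E3 → ℂ} {x : E3} (hx : x ∈ U) (he : ∀ y ∈ U, g y = h y)
    (i : Fin 3) : pd i g x = pd i h x := by
  unfold pd
  rw [Filter.EventuallyEq.fderiv_eq]
  filter_upwards [isOpen_U.mem_nhds hx] using he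

lemma pd_add {g h : E3 → ℂ} {x : E3} (hg : DifferentiableAt ℝ g x)
    (hh : DifferentiableAt ℝ h x) (i : Fin 3) :
    pd i (fun y => g y + h y) x = pd i g x + pd i h x := by
  unfold pd; rw [fderiv_fun_add hg hh]; rfl

lemma pd_sub {g h : E3 → ℂ} {x : E3} (hg : DifferentiableAt ℝ g x)
    (hh : DifferentiableAt ℝ h x) (i : Fin 3) :
    pd i (fun y => g y - h y) x = pd i g x - pd i h x := by
  unfold pd; rw [fderiv_fun_sub hg hh]; rfl

lemma pd_mul {g h : E3 → ℂ} {x : E3} (hg : DifferentiableAt ℝ g x)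
    (hh : DifferentiableAt ℝ h x) (i : Fin 3) :
    pd i (fun y => g y * h y) x = pd i g x * h x + g x * pd i h x := by
  unfold pd; rw [fderiv_fun_mul hg hh]; simp; ring

/-- the coordinate function -/
def c (j : Fin 3) : E3 → ℂ := fun y => ((y j : ℝ) : ℂ)

lemma Sm_c (j : Fin 3) : Sm (c j) := by
  have : c j = fun y => Complex.ofRealCLM (EuclideanSpace.proj (𝕜 := ℝ) j y) := rfl
  rw [Sm, this]
  exact (Complex.ofRealCLM.contDiff.comp (EuclideanSpace.proj (𝕜 := ℝ) j).contDiff).contDiffOn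

lemma pd_c (i j : Fin 3) (x : E3) : pd i (c j) x = if j = i then 1 else 0 := by
  have : c j = fun y => (Complex.ofRealCLM.comp (EuclideanSpace.proj (𝕜 := ℝ) j)) y := rfl
  rw [pd, this, ContinuousLinearMap.fderiv]
  simp [EuclideanSpace.proj, EuclideanSpace.single_apply]
  split <;> simp

/-- complexified inverse norm -/
def nf : E3 → ℂ := fun y => ((‖y‖⁻¹ : ℝ) : ℂ)

lemma Sm_nf : Sm nf := by
  have h1 : ContDiffOn ℝ (⊤ : ℕ∞) (fun y : E3 => ‖y‖) U := fun y hy =>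
    (contDiffAt_norm ℝ (hy : y ≠ 0)).contDiffWithinAt
  have h2 : ContDiffOn ℝ (⊤ : ℕ∞) (fun y : E3 => ‖y‖⁻¹) U :=
    h1.inv (fun y hy => norm_ne_zero_iff.2 hy)
  exact Complex.ofRealCLM.contDiff.comp_contDiffOn h2

lemma hasFDerivAt_norm {x : E3} (hx : x ∈ U) :
    HasFDerivAt (fun y : E3 => ‖y‖) (‖x‖⁻¹ • innerSL ℝ x) x := by
  have hx0 : x ≠ 0 := hx
  have h2 : HasFDerivAt (fun y : E3 => ‖y‖ ^ 2) (2 • innerSL ℝ x) x :=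
    (hasStrictFDerivAt_norm_sq x).hasFDerivAt
  have hne : ‖x‖ ^ 2 ≠ 0 := pow_ne_zero 2 (norm_ne_zero_iff.2 hx0)
  have h3 := h2.sqrt hne
  have he : (fun y : E3 => Real.sqrt (‖y‖ ^ 2)) = fun y : E3 => ‖y‖ := by
    funext y; rw [Real.sqrt_sq (norm_nonneg y)]
  have heq : (1 / (2 * Real.sqrt (‖x‖ ^ 2))) • ((2:ℕ) • innerSL ℝ x) = ‖x‖⁻¹ • innerSL ℝ x := by
    ext v
    have h2s : ((2:ℕ) • innerSL ℝ x) v = 2 * (innerSL ℝ x v) := by simp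
    simp only [ContinuousLinearMap.smul_apply, h2s, smul_eq_mul,
      Real.sqrt_sq (norm_nonneg x)]
    field_simp
  rw [he, heq] at h3
  exact h3

lemma pd_nf {x : E3} (hx : x ∈ U) (i : Fin 3) :
    pd i nf x = -(c i x) * (nf x) ^ 3 := by
  have hx0 : x ≠ 0 := hx
  have hn : ‖x‖ ≠ 0 := norm_ne_zero_iff.2 hx0
  have h1 := hasFDerivAt_norm hx
  have h2 : HasFDerivAt (fun y : E3 => ‖y‖⁻¹)
      ((-(‖x‖ ^ 2)⁻¹) • (‖x‖⁻¹ • innerSL ℝ x)) x :=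
    (hasDerivAt_inv hn).comp_hasFDerivAt x h1
  have h3 : HasFDerivAt nf
      (Complex.ofRealCLM.comp ((-(‖x‖ ^ 2)⁻¹) • (‖x‖⁻¹ • innerSL ℝ x))) x :=
    Complex.ofRealCLM.hasFDerivAt.comp x h2
  rw [pd, h3.fderiv]
  have hinner : (innerSL ℝ x) (EuclideanSpace.single i (1:ℝ)) = x i := by
    simp [EuclideanSpace.inner_single_right]
  simp only [ContinuousLinearMap.coe_comp', Function.comp_apply,
    ContinuousLinearMap.coe_smul', Pi.smul_apply, hinner]
  rw [c, nf]
  push_cast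
  field_simp
  simp [Complex.ofRealCLM_apply]
  ring

lemma Sm.contDiffAt {g : E3 → ℂ} (hg : Sm g) {x : E3} (hx : x ∈ U) :
    ContDiffAt ℝ (⊤ : ℕ∞) g x := ContDiffOn.contDiffAt hg (isOpen_U.mem_nhds hx)

lemma pd_pd {g : E3 → ℂ} (hg : Sm g) {x : E3} (hx : x ∈ U) (i j : Fin 3) :
    pd i (pd j g) x = fderiv ℝ (fderiv ℝ g) x (EuclideanSpace.single i 1)
      (EuclideanSpace.single j 1) := by
  have hD : DifferentiableAt ℝ (fderiv ℝ g) x :=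
    ((hg.contDiffAt hx).fderiv_right (m := (⊤ : ℕ∞)) ((by simp))).differentiableAt (by simp)
  have : pd i (pd j g) x
      = fderiv ℝ (fun y => (fderiv ℝ g y) (EuclideanSpace.single j 1)) x
        (EuclideanSpace.single i 1) := rfl
  rw [this, fderiv_clm_apply hD (differentiableAt_const _)]
  simp

lemma pd_swap {g : E3 → ℂ} (hg : Sm g) {x : E3} (hx : x ∈ U) (i j : Fin 3) :
    pd i (pd j g) x = pd j (pd i g) x := by
  rw [pd_pd hg hx, pd_pd hg hx]
  exact ((hg.contDiffAt hx).isSymmSndFDerivAt (by simp [minSmoothness_of_isRCLikeNormedField]; exact WithTop.coe_le_coe.mpr (le_top : (2:ℕ∞) ≤ ⊤))) _ _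

lemma pd_swap1 {g : E3 → ℂ} (hg : Sm g) {x : E3} (hx : x ∈ U) (i j k : Fin 3) :
    pd i (pd j (pd k g)) x = pd i (pd k (pd j g)) x :=
  pd_congr_U hx (fun y hy => pd_swap hg hy j k) i

lemma pd_swap2 {g : E3 → ℂ} (hg : Sm g) {x : E3} (hx : x ∈ U) (i j k l : Fin 3) :
    pd i (pd j (pd k (pd l g))) x = pd i (pd j (pd l (pd k g))) x :=
  pd_congr_U hx (fun y hy => pd_swap1 hg hy j k l) i

lemma pd_const (z : ℂ) (i : Fin 3) (x : E3) : pd i (fun _ => z) x = 0 := by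
  unfold pd; rw [fderiv_fun_const]; simp

lemma pd_neg (g : E3 → ℂ) (i : Fin 3) (x : E3) :
    pd i (fun y => -(g y)) x = -(pd i g x) := by
  unfold pd; rw [fderiv_fun_neg]; simp

inductive Ex : Type where
  | const : ℂ → Ex
  | coord : Fin 3 → Ex
  | invn : Ex
  | base : List (Fin 3) → Ex
  | add : Ex → Ex → Ex
  | sub : Ex → Ex → Ex
  | mul : Ex → Ex → Ex
  | neg : Ex → Ex

def pdl : List (Fin 3) → (E3 → ℂ) → (E3 → ℂ)
  | [], f => f
  | i :: l, f => pd i (pdl l f)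

def ev (f : E3 → ℂ) : Ex → E3 → ℂ
  | .const z => fun _ => z
  | .coord j => c j
  | .invn => nf
  | .base l => pdl l f
  | .add a b => fun y => ev f a y + ev f b y
  | .sub a b => fun y => ev f a y - ev f b y
  | .mul a b => fun y => ev f a y * ev f b y
  | .neg a => fun y => -(ev f a y)

def pdE (j : Fin 3) : Ex → Ex
  | .const _ => .const 0
  | .coord k => .const (if k = j then 1 else 0)
  | .invn => .neg (.mul (.coord j) (.mul .invn (.mul .invn .invn)))
  | .base l => .base (j :: l)
  | .add a b => .add (pdE j a) (pdE j b)
  | .sub a b => .sub (pdE j a) (pdE j b)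
  | .mul a b => .add (.mul (pdE j a) b) (.mul a (pdE j b))
  | .neg a => .neg (pdE j a)

lemma Sm_pdl {f : E3 → ℂ} (hf : Sm f) : ∀ l : List (Fin 3), Sm (pdl l f)
  | [] => hf
  | i :: l => (Sm_pdl hf l).pd i

lemma Sm_ev {f : E3 → ℂ} (hf : Sm f) : ∀ e : Ex, Sm (ev f e)
  | .const z => contDiffOn_const
  | .coord j => Sm_c j
  | .invn => Sm_nf
  | .base l => Sm_pdl hf l
  | .add a b => (Sm_ev hf a).add (Sm_ev hf b)
  | .sub a b => (Sm_ev hf a).sub (Sm_ev hf b)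
  | .mul a b => (Sm_ev hf a).mul (Sm_ev hf b)
  | .neg a => (Sm_ev hf a).neg

lemma pd_ev {f : E3 → ℂ} (hf : Sm f) (e : Ex) (j : Fin 3) {x : E3} (hx : x ∈ U) :
    pd j (ev f e) x = ev f (pdE j e) x := by
  induction e with
  | const z => exact pd_const z j x
  | coord k => exact pd_c j k x
  | invn =>
      show pd j nf x = -(c j x * (nf x * (nf x * nf x)))
      rw [pd_nf hx]; ring
  | base l => rfl
  | add a b iha ihb =>
      show pd j (fun y => ev f a y + ev f b y) x = _
      rw [pd_add ((Sm_ev hf a).diffAt hx) ((Sm_ev hf b).diffAt hx), iha, ihb]; rfl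
  | sub a b iha ihb =>
      show pd j (fun y => ev f a y - ev f b y) x = _
      rw [pd_sub ((Sm_ev hf a).diffAt hx) ((Sm_ev hf b).diffAt hx), iha, ihb]; rfl
  | mul a b iha ihb =>
      show pd j (fun y => ev f a y * ev f b y) x = _
      rw [pd_mul ((Sm_ev hf a).diffAt hx) ((Sm_ev hf b).diffAt hx), iha, ihb]; rfl
  | neg a iha =>
      show pd j (fun y => -(ev f a y)) x = _
      rw [pd_neg, iha]; rfl

lemma pd2_ev {f : E3 → ℂ} (hf : Sm f) (e : Ex) (i j : Fin 3) {x : E3} (hx : x ∈ U) :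
    pd i (pd j (ev f e)) x = ev f (pdE i (pdE j e)) x := by
  rw [pd_congr_U hx (fun y hy => pd_ev hf e j hy) i]
  exact pd_ev hf _ i hx

open Ex in
def eL1 : Ex := sub (mul (coord 1) (base [2])) (mul (coord 2) (base [1]))
open Ex in
def eL2 : Ex := sub (mul (coord 2) (base [0])) (mul (coord 0) (base [2]))
open Ex in
def eL3 : Ex := sub (mul (coord 0) (base [1])) (mul (coord 1) (base [0]))

open Ex in
def eR1 (γ : ℝ) : Ex :=
  mul (const Complex.I)
    (add (sub (sub (sub (mul (coord 0) (base [1,1])) (mul (coord 1) (base [0,1])))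
      (sub (mul (coord 2) (base [0,2])) (mul (coord 0) (base [2,2])))) (base [0]))
      (mul (const (γ:ℂ)) (mul (coord 0) (mul invn (base [])))))

open Ex in
def eR2 (γ : ℝ) : Ex :=
  mul (const Complex.I)
    (add (sub (sub (sub (mul (coord 1) (base [2,2])) (mul (coord 2) (base [1,2])))
      (sub (mul (coord 0) (base [1,0])) (mul (coord 1) (base [0,0])))) (base [1]))
      (mul (const (γ:ℂ)) (mul (coord 1) (mul invn (base [])))))

open Ex in
def eR3 (γ : ℝ) : Ex :=
  mul (const Complex.I)
    (add (sub (sub (sub (mul (coord 2) (base [0,0])) (mul (coord 0) (base [2,0])))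
      (sub (mul (coord 1) (base [2,1])) (mul (coord 2) (base [1,1])))) (base [2]))
      (mul (const (γ:ℂ)) (mul (coord 2) (mul invn (base [])))))

lemma L1_eq (f : E3 → ℂ) : L1 f = ev f eL1 := by
  funext y; simp [L1, eL1, ev, pdl, c]

lemma L2_eq (f : E3 → ℂ) : L2 f = ev f eL2 := by
  funext y; simp [L2, eL2, ev, pdl, c]

lemma L3_eq (f : E3 → ℂ) : L3 f = ev f eL3 := by
  funext y; simp [L3, eL3, ev, pdl, c]

lemma R1_eq (γ : ℝ) (f : E3 → ℂ) : R1 γ f = ev f (eR1 γ) := by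
  funext y; simp [R1, L3, L2, eR1, ev, pdl, c, nf]; push_cast; ring

lemma R2_eq (γ : ℝ) (f : E3 → ℂ) : R2 γ f = ev f (eR2 γ) := by
  funext y; simp [R2, L1, L3, eR2, ev, pdl, c, nf]; push_cast; ring

lemma R3_eq (γ : ℝ) (f : E3 → ℂ) : R3 γ f = ev f (eR3 γ) := by
  funext y; simp [R3, L2, L1, eR3, ev, pdl, c, nf]; push_cast; ring

lemma hrel {x : E3} (hx : x ∈ U) :
    ((x 0 : ℂ)^2 + (x 1 : ℂ)^2 + (x 2 : ℂ)^2) * (nf x)^2 = 1 := by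
  have hx0 : x ≠ 0 := hx
  have hn : ‖x‖ ≠ 0 := norm_ne_zero_iff.2 hx0
  have h : ‖x‖^2 = x 0^2 + x 1^2 + x 2^2 := by
    rw [EuclideanSpace.norm_eq, Real.sq_sqrt (by positivity)]
    simp [Fin.sum_univ_three]
  have : (x 0^2 + x 1^2 + x 2^2) * (‖x‖⁻¹)^2 = 1 := by
    rw [← h]; field_simp
  calc ((x 0 : ℂ)^2 + (x 1 : ℂ)^2 + (x 2 : ℂ)^2) * (nf x)^2
      = (((x 0^2 + x 1^2 + x 2^2) * (‖x‖⁻¹)^2 : ℝ) : ℂ) := by rw [nf]; push_cast; ring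
    _ = 1 := by rw [this]; norm_num

lemma pot_eq (γ : ℝ) {x : E3} : ((2 * γ / ‖x‖ : ℝ) : ℂ) = 2 * (γ:ℂ) * nf x := by
  rw [nf]; push_cast; ring

lemma potR_eq (γ : ℝ) (k : Fin 3) {x : E3} :
    ((γ * x k / ‖x‖ : ℝ) : ℂ) = (γ:ℂ) * (x k:ℂ) * nf x := by
  rw [nf]; push_cast; ring

end RL

set_option maxHeartbeats 4000000 in
/-- The commutation relations `[R₁,R₂] = T L₃`, `[R₂,R₃] = T L₁`, `[R₃,R₁] = T L₂`
for the Runge–Lenz operators, on smooth functions on `ℝ³ ∖ {0}`. -/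
theorem runge_lenz_commutation_relations
    (γ : ℝ) (hγ : 0 < γ)
    (f : E3 → ℂ) (hf : ContDiffOn ℝ (⊤ : ℕ∞) f {x : E3 | x ≠ 0})
    (x : E3) (hx : x ≠ 0) :
    R1 γ (R2 γ f) x - R2 γ (R1 γ f) x = Tsch γ (L3 f) x ∧
    R2 γ (R3 γ f) x - R3 γ (R2 γ f) x = Tsch γ (L1 f) x ∧
    R3 γ (R1 γ f) x - R1 γ (R3 γ f) x = Tsch γ (L2 f) x := by
  have hxU : x ∈ RL.U := hx
  have hsm : RL.Sm f := hf
  have hrel := RL.hrel hxU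
  have hI : Complex.I ^ 2 = -1 := Complex.I_sq
  have h1 : ∀ (e : RL.Ex) (j : Fin 3), pd j (RL.ev f e) x = RL.ev f (RL.pdE j e) x :=
    fun e j => RL.pd_ev hsm e j hxU
  have h2 : ∀ (e : RL.Ex) (i j : Fin 3),
      pd i (pd j (RL.ev f e)) x = RL.ev f (RL.pdE i (RL.pdE j e)) x :=
    fun e i j => RL.pd2_ev hsm e i j hxU
  have hs_10 : pd 1 (pd 0 (f)) x = pd 0 (pd 1 (f)) x := by
    rw [RL.pd_swap hsm hxU 1 0]
  have hs_20 : pd 2 (pd 0 (f)) x = pd 0 (pd 2 (f)) x := by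
    rw [RL.pd_swap hsm hxU 2 0]
  have hs_21 : pd 2 (pd 1 (f)) x = pd 1 (pd 2 (f)) x := by
    rw [RL.pd_swap hsm hxU 2 1]
  have hs_010 : pd 0 (pd 1 (pd 0 (f))) x = pd 0 (pd 0 (pd 1 (f))) x := by
    rw [RL.pd_swap1 hsm hxU 0 1 0]
  have hs_020 : pd 0 (pd 2 (pd 0 (f))) x = pd 0 (pd 0 (pd 2 (f))) x := by
    rw [RL.pd_swap1 hsm hxU 0 2 0]
  have hs_021 : pd 0 (pd 2 (pd 1 (f))) x = pd 0 (pd 1 (pd 2 (f))) x := by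
    rw [RL.pd_swap1 hsm hxU 0 2 1]
  have hs_100 : pd 1 (pd 0 (pd 0 (f))) x = pd 0 (pd 0 (pd 1 (f))) x := by
    rw [RL.pd_swap (hsm.pd 0) hxU 1 0, RL.pd_swap1 hsm hxU 0 1 0]
  have hs_101 : pd 1 (pd 0 (pd 1 (f))) x = pd 0 (pd 1 (pd 1 (f))) x := by
    rw [RL.pd_swap (hsm.pd 1) hxU 1 0]
  have hs_102 : pd 1 (pd 0 (pd 2 (f))) x = pd 0 (pd 1 (pd 2 (f))) x := by
    rw [RL.pd_swap (hsm.pd 2) hxU 1 0]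
  have hs_110 : pd 1 (pd 1 (pd 0 (f))) x = pd 0 (pd 1 (pd 1 (f))) x := by
    rw [RL.pd_swap1 hsm hxU 1 1 0, RL.pd_swap (hsm.pd 1) hxU 1 0]
  have hs_120 : pd 1 (pd 2 (pd 0 (f))) x = pd 0 (pd 1 (pd 2 (f))) x := by
    rw [RL.pd_swap1 hsm hxU 1 2 0, RL.pd_swap (hsm.pd 2) hxU 1 0]
  have hs_121 : pd 1 (pd 2 (pd 1 (f))) x = pd 1 (pd 1 (pd 2 (f))) x := by
    rw [RL.pd_swap1 hsm hxU 1 2 1]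
  have hs_200 : pd 2 (pd 0 (pd 0 (f))) x = pd 0 (pd 0 (pd 2 (f))) x := by
    rw [RL.pd_swap (hsm.pd 0) hxU 2 0, RL.pd_swap1 hsm hxU 0 2 0]
  have hs_201 : pd 2 (pd 0 (pd 1 (f))) x = pd 0 (pd 1 (pd 2 (f))) x := by
    rw [RL.pd_swap (hsm.pd 1) hxU 2 0, RL.pd_swap1 hsm hxU 0 2 1]
  have hs_202 : pd 2 (pd 0 (pd 2 (f))) x = pd 0 (pd 2 (pd 2 (f))) x := by
    rw [RL.pd_swap (hsm.pd 2) hxU 2 0]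
  have hs_210 : pd 2 (pd 1 (pd 0 (f))) x = pd 0 (pd 1 (pd 2 (f))) x := by
    rw [RL.pd_swap (hsm.pd 0) hxU 2 1, RL.pd_swap1 hsm hxU 1 2 0, RL.pd_swap (hsm.pd 2) hxU 1 0]
  have hs_211 : pd 2 (pd 1 (pd 1 (f))) x = pd 1 (pd 1 (pd 2 (f))) x := by
    rw [RL.pd_swap (hsm.pd 1) hxU 2 1, RL.pd_swap1 hsm hxU 1 2 1]
  have hs_212 : pd 2 (pd 1 (pd 2 (f))) x = pd 1 (pd 2 (pd 2 (f))) x := by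
    rw [RL.pd_swap (hsm.pd 2) hxU 2 1]
  have hs_220 : pd 2 (pd 2 (pd 0 (f))) x = pd 0 (pd 2 (pd 2 (f))) x := by
    rw [RL.pd_swap1 hsm hxU 2 2 0, RL.pd_swap (hsm.pd 2) hxU 2 0]
  have hs_221 : pd 2 (pd 2 (pd 1 (f))) x = pd 1 (pd 2 (pd 2 (f))) x := by
    rw [RL.pd_swap1 hsm hxU 2 2 1, RL.pd_swap (hsm.pd 2) hxU 2 1]
  have hs_0010 : pd 0 (pd 0 (pd 1 (pd 0 (f)))) x = pd 0 (pd 0 (pd 0 (pd 1 (f)))) x := by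
    rw [RL.pd_swap2 hsm hxU 0 0 1 0]
  have hs_0020 : pd 0 (pd 0 (pd 2 (pd 0 (f)))) x = pd 0 (pd 0 (pd 0 (pd 2 (f)))) x := by
    rw [RL.pd_swap2 hsm hxU 0 0 2 0]
  have hs_0021 : pd 0 (pd 0 (pd 2 (pd 1 (f)))) x = pd 0 (pd 0 (pd 1 (pd 2 (f)))) x := by
    rw [RL.pd_swap2 hsm hxU 0 0 2 1]
  have hs_0100 : pd 0 (pd 1 (pd 0 (pd 0 (f)))) x = pd 0 (pd 0 (pd 0 (pd 1 (f)))) x := by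
    rw [RL.pd_swap1 (hsm.pd 0) hxU 0 1 0, RL.pd_swap2 hsm hxU 0 0 1 0]
  have hs_0101 : pd 0 (pd 1 (pd 0 (pd 1 (f)))) x = pd 0 (pd 0 (pd 1 (pd 1 (f)))) x := by
    rw [RL.pd_swap1 (hsm.pd 1) hxU 0 1 0]
  have hs_0102 : pd 0 (pd 1 (pd 0 (pd 2 (f)))) x = pd 0 (pd 0 (pd 1 (pd 2 (f)))) x := by
    rw [RL.pd_swap1 (hsm.pd 2) hxU 0 1 0]
  have hs_0110 : pd 0 (pd 1 (pd 1 (pd 0 (f)))) x = pd 0 (pd 0 (pd 1 (pd 1 (f)))) x := by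
    rw [RL.pd_swap2 hsm hxU 0 1 1 0, RL.pd_swap1 (hsm.pd 1) hxU 0 1 0]
  have hs_0120 : pd 0 (pd 1 (pd 2 (pd 0 (f)))) x = pd 0 (pd 0 (pd 1 (pd 2 (f)))) x := by
    rw [RL.pd_swap2 hsm hxU 0 1 2 0, RL.pd_swap1 (hsm.pd 2) hxU 0 1 0]
  have hs_0121 : pd 0 (pd 1 (pd 2 (pd 1 (f)))) x = pd 0 (pd 1 (pd 1 (pd 2 (f)))) x := by
    rw [RL.pd_swap2 hsm hxU 0 1 2 1]
  have hs_0200 : pd 0 (pd 2 (pd 0 (pd 0 (f)))) x = pd 0 (pd 0 (pd 0 (pd 2 (f)))) x := by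
    rw [RL.pd_swap1 (hsm.pd 0) hxU 0 2 0, RL.pd_swap2 hsm hxU 0 0 2 0]
  have hs_0201 : pd 0 (pd 2 (pd 0 (pd 1 (f)))) x = pd 0 (pd 0 (pd 1 (pd 2 (f)))) x := by
    rw [RL.pd_swap1 (hsm.pd 1) hxU 0 2 0, RL.pd_swap2 hsm hxU 0 0 2 1]
  have hs_0202 : pd 0 (pd 2 (pd 0 (pd 2 (f)))) x = pd 0 (pd 0 (pd 2 (pd 2 (f)))) x := by
    rw [RL.pd_swap1 (hsm.pd 2) hxU 0 2 0]
  have hs_0210 : pd 0 (pd 2 (pd 1 (pd 0 (f)))) x = pd 0 (pd 0 (pd 1 (pd 2 (f)))) x := by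
    rw [RL.pd_swap1 (hsm.pd 0) hxU 0 2 1, RL.pd_swap2 hsm hxU 0 1 2 0, RL.pd_swap1 (hsm.pd 2) hxU 0 1 0]
  have hs_0211 : pd 0 (pd 2 (pd 1 (pd 1 (f)))) x = pd 0 (pd 1 (pd 1 (pd 2 (f)))) x := by
    rw [RL.pd_swap1 (hsm.pd 1) hxU 0 2 1, RL.pd_swap2 hsm hxU 0 1 2 1]
  have hs_0212 : pd 0 (pd 2 (pd 1 (pd 2 (f)))) x = pd 0 (pd 1 (pd 2 (pd 2 (f)))) x := by
    rw [RL.pd_swap1 (hsm.pd 2) hxU 0 2 1]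
  have hs_0220 : pd 0 (pd 2 (pd 2 (pd 0 (f)))) x = pd 0 (pd 0 (pd 2 (pd 2 (f)))) x := by
    rw [RL.pd_swap2 hsm hxU 0 2 2 0, RL.pd_swap1 (hsm.pd 2) hxU 0 2 0]
  have hs_0221 : pd 0 (pd 2 (pd 2 (pd 1 (f)))) x = pd 0 (pd 1 (pd 2 (pd 2 (f)))) x := by
    rw [RL.pd_swap2 hsm hxU 0 2 2 1, RL.pd_swap1 (hsm.pd 2) hxU 0 2 1]
  have hs_1000 : pd 1 (pd 0 (pd 0 (pd 0 (f)))) x = pd 0 (pd 0 (pd 0 (pd 1 (f)))) x := by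
    rw [RL.pd_swap ((hsm.pd 0).pd 0) hxU 1 0, RL.pd_swap1 (hsm.pd 0) hxU 0 1 0, RL.pd_swap2 hsm hxU 0 0 1 0]
  have hs_1001 : pd 1 (pd 0 (pd 0 (pd 1 (f)))) x = pd 0 (pd 0 (pd 1 (pd 1 (f)))) x := by
    rw [RL.pd_swap ((hsm.pd 1).pd 0) hxU 1 0, RL.pd_swap1 (hsm.pd 1) hxU 0 1 0]
  have hs_1002 : pd 1 (pd 0 (pd 0 (pd 2 (f)))) x = pd 0 (pd 0 (pd 1 (pd 2 (f)))) x := by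
    rw [RL.pd_swap ((hsm.pd 2).pd 0) hxU 1 0, RL.pd_swap1 (hsm.pd 2) hxU 0 1 0]
  have hs_1010 : pd 1 (pd 0 (pd 1 (pd 0 (f)))) x = pd 0 (pd 0 (pd 1 (pd 1 (f)))) x := by
    rw [RL.pd_swap ((hsm.pd 0).pd 1) hxU 1 0, RL.pd_swap2 hsm hxU 0 1 1 0, RL.pd_swap1 (hsm.pd 1) hxU 0 1 0]
  have hs_1011 : pd 1 (pd 0 (pd 1 (pd 1 (f)))) x = pd 0 (pd 1 (pd 1 (pd 1 (f)))) x := by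
    rw [RL.pd_swap ((hsm.pd 1).pd 1) hxU 1 0]
  have hs_1012 : pd 1 (pd 0 (pd 1 (pd 2 (f)))) x = pd 0 (pd 1 (pd 1 (pd 2 (f)))) x := by
    rw [RL.pd_swap ((hsm.pd 2).pd 1) hxU 1 0]
  have hs_1020 : pd 1 (pd 0 (pd 2 (pd 0 (f)))) x = pd 0 (pd 0 (pd 1 (pd 2 (f)))) x := by
    rw [RL.pd_swap ((hsm.pd 0).pd 2) hxU 1 0, RL.pd_swap2 hsm hxU 0 1 2 0, RL.pd_swap1 (hsm.pd 2) hxU 0 1 0]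
  have hs_1021 : pd 1 (pd 0 (pd 2 (pd 1 (f)))) x = pd 0 (pd 1 (pd 1 (pd 2 (f)))) x := by
    rw [RL.pd_swap ((hsm.pd 1).pd 2) hxU 1 0, RL.pd_swap2 hsm hxU 0 1 2 1]
  have hs_1022 : pd 1 (pd 0 (pd 2 (pd 2 (f)))) x = pd 0 (pd 1 (pd 2 (pd 2 (f)))) x := by
    rw [RL.pd_swap ((hsm.pd 2).pd 2) hxU 1 0]
  have hs_1100 : pd 1 (pd 1 (pd 0 (pd 0 (f)))) x = pd 0 (pd 0 (pd 1 (pd 1 (f)))) x := by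
    rw [RL.pd_swap1 (hsm.pd 0) hxU 1 1 0, RL.pd_swap ((hsm.pd 0).pd 1) hxU 1 0, RL.pd_swap2 hsm hxU 0 1 1 0, RL.pd_swap1 (hsm.pd 1) hxU 0 1 0]
  have hs_1101 : pd 1 (pd 1 (pd 0 (pd 1 (f)))) x = pd 0 (pd 1 (pd 1 (pd 1 (f)))) x := by
    rw [RL.pd_swap1 (hsm.pd 1) hxU 1 1 0, RL.pd_swap ((hsm.pd 1).pd 1) hxU 1 0]
  have hs_1102 : pd 1 (pd 1 (pd 0 (pd 2 (f)))) x = pd 0 (pd 1 (pd 1 (pd 2 (f)))) x := by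
    rw [RL.pd_swap1 (hsm.pd 2) hxU 1 1 0, RL.pd_swap ((hsm.pd 2).pd 1) hxU 1 0]
  have hs_1110 : pd 1 (pd 1 (pd 1 (pd 0 (f)))) x = pd 0 (pd 1 (pd 1 (pd 1 (f)))) x := by
    rw [RL.pd_swap2 hsm hxU 1 1 1 0, RL.pd_swap1 (hsm.pd 1) hxU 1 1 0, RL.pd_swap ((hsm.pd 1).pd 1) hxU 1 0]
  have hs_1120 : pd 1 (pd 1 (pd 2 (pd 0 (f)))) x = pd 0 (pd 1 (pd 1 (pd 2 (f)))) x := by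
    rw [RL.pd_swap2 hsm hxU 1 1 2 0, RL.pd_swap1 (hsm.pd 2) hxU 1 1 0, RL.pd_swap ((hsm.pd 2).pd 1) hxU 1 0]
  have hs_1121 : pd 1 (pd 1 (pd 2 (pd 1 (f)))) x = pd 1 (pd 1 (pd 1 (pd 2 (f)))) x := by
    rw [RL.pd_swap2 hsm hxU 1 1 2 1]
  have hs_1200 : pd 1 (pd 2 (pd 0 (pd 0 (f)))) x = pd 0 (pd 0 (pd 1 (pd 2 (f)))) x := by
    rw [RL.pd_swap1 (hsm.pd 0) hxU 1 2 0, RL.pd_swap ((hsm.pd 0).pd 2) hxU 1 0, RL.pd_swap2 hsm hxU 0 1 2 0, RL.pd_swap1 (hsm.pd 2) hxU 0 1 0]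
  have hs_1201 : pd 1 (pd 2 (pd 0 (pd 1 (f)))) x = pd 0 (pd 1 (pd 1 (pd 2 (f)))) x := by
    rw [RL.pd_swap1 (hsm.pd 1) hxU 1 2 0, RL.pd_swap ((hsm.pd 1).pd 2) hxU 1 0, RL.pd_swap2 hsm hxU 0 1 2 1]
  have hs_1202 : pd 1 (pd 2 (pd 0 (pd 2 (f)))) x = pd 0 (pd 1 (pd 2 (pd 2 (f)))) x := by
    rw [RL.pd_swap1 (hsm.pd 2) hxU 1 2 0, RL.pd_swap ((hsm.pd 2).pd 2) hxU 1 0]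
  have hs_1210 : pd 1 (pd 2 (pd 1 (pd 0 (f)))) x = pd 0 (pd 1 (pd 1 (pd 2 (f)))) x := by
    rw [RL.pd_swap1 (hsm.pd 0) hxU 1 2 1, RL.pd_swap2 hsm hxU 1 1 2 0, RL.pd_swap1 (hsm.pd 2) hxU 1 1 0, RL.pd_swap ((hsm.pd 2).pd 1) hxU 1 0]
  have hs_1211 : pd 1 (pd 2 (pd 1 (pd 1 (f)))) x = pd 1 (pd 1 (pd 1 (pd 2 (f)))) x := by
    rw [RL.pd_swap1 (hsm.pd 1) hxU 1 2 1, RL.pd_swap2 hsm hxU 1 1 2 1]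
  have hs_1212 : pd 1 (pd 2 (pd 1 (pd 2 (f)))) x = pd 1 (pd 1 (pd 2 (pd 2 (f)))) x := by
    rw [RL.pd_swap1 (hsm.pd 2) hxU 1 2 1]
  have hs_1220 : pd 1 (pd 2 (pd 2 (pd 0 (f)))) x = pd 0 (pd 1 (pd 2 (pd 2 (f)))) x := by
    rw [RL.pd_swap2 hsm hxU 1 2 2 0, RL.pd_swap1 (hsm.pd 2) hxU 1 2 0, RL.pd_swap ((hsm.pd 2).pd 2) hxU 1 0]
  have hs_1221 : pd 1 (pd 2 (pd 2 (pd 1 (f)))) x = pd 1 (pd 1 (pd 2 (pd 2 (f)))) x := by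
    rw [RL.pd_swap2 hsm hxU 1 2 2 1, RL.pd_swap1 (hsm.pd 2) hxU 1 2 1]
  have hs_2000 : pd 2 (pd 0 (pd 0 (pd 0 (f)))) x = pd 0 (pd 0 (pd 0 (pd 2 (f)))) x := by
    rw [RL.pd_swap ((hsm.pd 0).pd 0) hxU 2 0, RL.pd_swap1 (hsm.pd 0) hxU 0 2 0, RL.pd_swap2 hsm hxU 0 0 2 0]
  have hs_2001 : pd 2 (pd 0 (pd 0 (pd 1 (f)))) x = pd 0 (pd 0 (pd 1 (pd 2 (f)))) x := by
    rw [RL.pd_swap ((hsm.pd 1).pd 0) hxU 2 0, RL.pd_swap1 (hsm.pd 1) hxU 0 2 0, RL.pd_swap2 hsm hxU 0 0 2 1]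
  have hs_2002 : pd 2 (pd 0 (pd 0 (pd 2 (f)))) x = pd 0 (pd 0 (pd 2 (pd 2 (f)))) x := by
    rw [RL.pd_swap ((hsm.pd 2).pd 0) hxU 2 0, RL.pd_swap1 (hsm.pd 2) hxU 0 2 0]
  have hs_2010 : pd 2 (pd 0 (pd 1 (pd 0 (f)))) x = pd 0 (pd 0 (pd 1 (pd 2 (f)))) x := by
    rw [RL.pd_swap ((hsm.pd 0).pd 1) hxU 2 0, RL.pd_swap1 (hsm.pd 0) hxU 0 2 1, RL.pd_swap2 hsm hxU 0 1 2 0, RL.pd_swap1 (hsm.pd 2) hxU 0 1 0]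
  have hs_2011 : pd 2 (pd 0 (pd 1 (pd 1 (f)))) x = pd 0 (pd 1 (pd 1 (pd 2 (f)))) x := by
    rw [RL.pd_swap ((hsm.pd 1).pd 1) hxU 2 0, RL.pd_swap1 (hsm.pd 1) hxU 0 2 1, RL.pd_swap2 hsm hxU 0 1 2 1]
  have hs_2012 : pd 2 (pd 0 (pd 1 (pd 2 (f)))) x = pd 0 (pd 1 (pd 2 (pd 2 (f)))) x := by
    rw [RL.pd_swap ((hsm.pd 2).pd 1) hxU 2 0, RL.pd_swap1 (hsm.pd 2) hxU 0 2 1]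
  have hs_2020 : pd 2 (pd 0 (pd 2 (pd 0 (f)))) x = pd 0 (pd 0 (pd 2 (pd 2 (f)))) x := by
    rw [RL.pd_swap ((hsm.pd 0).pd 2) hxU 2 0, RL.pd_swap2 hsm hxU 0 2 2 0, RL.pd_swap1 (hsm.pd 2) hxU 0 2 0]
  have hs_2021 : pd 2 (pd 0 (pd 2 (pd 1 (f)))) x = pd 0 (pd 1 (pd 2 (pd 2 (f)))) x := by
    rw [RL.pd_swap ((hsm.pd 1).pd 2) hxU 2 0, RL.pd_swap2 hsm hxU 0 2 2 1, RL.pd_swap1 (hsm.pd 2) hxU 0 2 1]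
  have hs_2022 : pd 2 (pd 0 (pd 2 (pd 2 (f)))) x = pd 0 (pd 2 (pd 2 (pd 2 (f)))) x := by
    rw [RL.pd_swap ((hsm.pd 2).pd 2) hxU 2 0]
  have hs_2100 : pd 2 (pd 1 (pd 0 (pd 0 (f)))) x = pd 0 (pd 0 (pd 1 (pd 2 (f)))) x := by
    rw [RL.pd_swap ((hsm.pd 0).pd 0) hxU 2 1, RL.pd_swap1 (hsm.pd 0) hxU 1 2 0, RL.pd_swap ((hsm.pd 0).pd 2) hxU 1 0, RL.pd_swap2 hsm hxU 0 1 2 0, RL.pd_swap1 (hsm.pd 2) hxU 0 1 0]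
  have hs_2101 : pd 2 (pd 1 (pd 0 (pd 1 (f)))) x = pd 0 (pd 1 (pd 1 (pd 2 (f)))) x := by
    rw [RL.pd_swap ((hsm.pd 1).pd 0) hxU 2 1, RL.pd_swap1 (hsm.pd 1) hxU 1 2 0, RL.pd_swap ((hsm.pd 1).pd 2) hxU 1 0, RL.pd_swap2 hsm hxU 0 1 2 1]
  have hs_2102 : pd 2 (pd 1 (pd 0 (pd 2 (f)))) x = pd 0 (pd 1 (pd 2 (pd 2 (f)))) x := by
    rw [RL.pd_swap ((hsm.pd 2).pd 0) hxU 2 1, RL.pd_swap1 (hsm.pd 2) hxU 1 2 0, RL.pd_swap ((hsm.pd 2).pd 2) hxU 1 0]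
  have hs_2110 : pd 2 (pd 1 (pd 1 (pd 0 (f)))) x = pd 0 (pd 1 (pd 1 (pd 2 (f)))) x := by
    rw [RL.pd_swap ((hsm.pd 0).pd 1) hxU 2 1, RL.pd_swap1 (hsm.pd 0) hxU 1 2 1, RL.pd_swap2 hsm hxU 1 1 2 0, RL.pd_swap1 (hsm.pd 2) hxU 1 1 0, RL.pd_swap ((hsm.pd 2).pd 1) hxU 1 0]
  have hs_2111 : pd 2 (pd 1 (pd 1 (pd 1 (f)))) x = pd 1 (pd 1 (pd 1 (pd 2 (f)))) x := by
    rw [RL.pd_swap ((hsm.pd 1).pd 1) hxU 2 1, RL.pd_swap1 (hsm.pd 1) hxU 1 2 1, RL.pd_swap2 hsm hxU 1 1 2 1]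
  have hs_2112 : pd 2 (pd 1 (pd 1 (pd 2 (f)))) x = pd 1 (pd 1 (pd 2 (pd 2 (f)))) x := by
    rw [RL.pd_swap ((hsm.pd 2).pd 1) hxU 2 1, RL.pd_swap1 (hsm.pd 2) hxU 1 2 1]
  have hs_2120 : pd 2 (pd 1 (pd 2 (pd 0 (f)))) x = pd 0 (pd 1 (pd 2 (pd 2 (f)))) x := by
    rw [RL.pd_swap ((hsm.pd 0).pd 2) hxU 2 1, RL.pd_swap2 hsm hxU 1 2 2 0, RL.pd_swap1 (hsm.pd 2) hxU 1 2 0, RL.pd_swap ((hsm.pd 2).pd 2) hxU 1 0]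
  have hs_2121 : pd 2 (pd 1 (pd 2 (pd 1 (f)))) x = pd 1 (pd 1 (pd 2 (pd 2 (f)))) x := by
    rw [RL.pd_swap ((hsm.pd 1).pd 2) hxU 2 1, RL.pd_swap2 hsm hxU 1 2 2 1, RL.pd_swap1 (hsm.pd 2) hxU 1 2 1]
  have hs_2122 : pd 2 (pd 1 (pd 2 (pd 2 (f)))) x = pd 1 (pd 2 (pd 2 (pd 2 (f)))) x := by
    rw [RL.pd_swap ((hsm.pd 2).pd 2) hxU 2 1]
  have hs_2200 : pd 2 (pd 2 (pd 0 (pd 0 (f)))) x = pd 0 (pd 0 (pd 2 (pd 2 (f)))) x := by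
    rw [RL.pd_swap1 (hsm.pd 0) hxU 2 2 0, RL.pd_swap ((hsm.pd 0).pd 2) hxU 2 0, RL.pd_swap2 hsm hxU 0 2 2 0, RL.pd_swap1 (hsm.pd 2) hxU 0 2 0]
  have hs_2201 : pd 2 (pd 2 (pd 0 (pd 1 (f)))) x = pd 0 (pd 1 (pd 2 (pd 2 (f)))) x := by
    rw [RL.pd_swap1 (hsm.pd 1) hxU 2 2 0, RL.pd_swap ((hsm.pd 1).pd 2) hxU 2 0, RL.pd_swap2 hsm hxU 0 2 2 1, RL.pd_swap1 (hsm.pd 2) hxU 0 2 1]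
  have hs_2202 : pd 2 (pd 2 (pd 0 (pd 2 (f)))) x = pd 0 (pd 2 (pd 2 (pd 2 (f)))) x := by
    rw [RL.pd_swap1 (hsm.pd 2) hxU 2 2 0, RL.pd_swap ((hsm.pd 2).pd 2) hxU 2 0]
  have hs_2210 : pd 2 (pd 2 (pd 1 (pd 0 (f)))) x = pd 0 (pd 1 (pd 2 (pd 2 (f)))) x := by
    rw [RL.pd_swap1 (hsm.pd 0) hxU 2 2 1, RL.pd_swap ((hsm.pd 0).pd 2) hxU 2 1, RL.pd_swap2 hsm hxU 1 2 2 0, RL.pd_swap1 (hsm.pd 2) hxU 1 2 0, RL.pd_swap ((hsm.pd 2).pd 2) hxU 1 0]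
  have hs_2211 : pd 2 (pd 2 (pd 1 (pd 1 (f)))) x = pd 1 (pd 1 (pd 2 (pd 2 (f)))) x := by
    rw [RL.pd_swap1 (hsm.pd 1) hxU 2 2 1, RL.pd_swap ((hsm.pd 1).pd 2) hxU 2 1, RL.pd_swap2 hsm hxU 1 2 2 1, RL.pd_swap1 (hsm.pd 2) hxU 1 2 1]
  have hs_2212 : pd 2 (pd 2 (pd 1 (pd 2 (f)))) x = pd 1 (pd 2 (pd 2 (pd 2 (f)))) x := by
    rw [RL.pd_swap1 (hsm.pd 2) hxU 2 2 1, RL.pd_swap ((hsm.pd 2).pd 2) hxU 2 1]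
  have hs_2220 : pd 2 (pd 2 (pd 2 (pd 0 (f)))) x = pd 0 (pd 2 (pd 2 (pd 2 (f)))) x := by
    rw [RL.pd_swap2 hsm hxU 2 2 2 0, RL.pd_swap1 (hsm.pd 2) hxU 2 2 0, RL.pd_swap ((hsm.pd 2).pd 2) hxU 2 0]
  have hs_2221 : pd 2 (pd 2 (pd 2 (pd 1 (f)))) x = pd 1 (pd 2 (pd 2 (pd 2 (f)))) x := by
    rw [RL.pd_swap2 hsm hxU 2 2 2 1, RL.pd_swap1 (hsm.pd 2) hxU 2 2 1, RL.pd_swap ((hsm.pd 2).pd 2) hxU 2 1]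
  refine ⟨?_, ?_, ?_⟩
  · rw [RL.R2_eq γ f, RL.R1_eq γ f, RL.L3_eq f]
    simp only [R1, R2, Tsch, L1, L2, L3, h2, h1, RL.pot_eq, RL.potR_eq]
    simp [RL.ev, RL.pdE, RL.pdl, RL.c, RL.eR1, RL.eR2, RL.eR3, RL.eL1, RL.eL2, RL.eL3]
    simp only [hs_10, hs_20, hs_21, hs_010, hs_020, hs_021, hs_100, hs_101, hs_102, hs_110, hs_120, hs_121, hs_200, hs_201, hs_202, hs_210, hs_211, hs_212, hs_220, hs_221, hs_0010, hs_0020, hs_0021, hs_0100, hs_0101, hs_0102, hs_0110, hs_0120, hs_0121, hs_0200, hs_0201, hs_0202, hs_0210, hs_0211, hs_0212, hs_0220, hs_0221, hs_1000, hs_1001, hs_1002, hs_1010, hs_1011, hs_1012, hs_1020, hs_1021, hs_1022, hs_1100, hs_1101, hs_1102, hs_1110, hs_1120, hs_1121, hs_1200, hs_1201, hs_1202, hs_1210, hs_1211, hs_1212, hs_1220, hs_1221, hs_2000, hs_2001, hs_2002, hs_2010, hs_2011, hs_2012, hs_2020, hs_2021, hs_2022, hs_2100, hs_2101, hs_2102,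 hs_2110, hs_2111, hs_2112, hs_2120, hs_2121, hs_2122, hs_2200, hs_2201, hs_2202, hs_2210, hs_2211, hs_2212, hs_2220, hs_2221]
    linear_combination (((-1) * (x 1 : ℂ) * RL.nf x * (γ:ℂ) * (pd 0 (f)) x) + ((x 0 : ℂ) * RL.nf x * (γ:ℂ) * (pd 1 (f)) x)) * hrel + (((-3) * (x 1 : ℂ) * RL.nf x * (γ:ℂ) * (pd 0 (f)) x) + ((x 1 : ℂ) * (x 2 : ℂ)^2 * RL.nf x^3 * (γ:ℂ) * (pd 0 (f)) x) + ((x 1 : ℂ)^3 * RL.nf x^3 * (γ:ℂ) * (pd 0 (f)) x) + ((x 0 : ℂ)^2 * (x 1 : ℂ) * RL.nf x^3 * (γ:ℂ) * (pd 0 (f)) x) + ((-1) * (x 1 : ℂ) * (pd 0 (pd 0 (pd 0 (f)))) x) + ((x 0 : ℂ) * (pd 0 (pd 0 (pd 1 (f)))) x) + ((-1) * (x 1 : ℂ) * (pd 0 (pd 1 (pd 1 (f)))) x) + ((-1) * (x 1 : ℂ) * (pd 0 (pd 2 (pd 2 (f)))) x) + ((3) * (x 0 : ℂ) * RL.nf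 x * (γ:ℂ) * (pd 1 (f)) x) + ((-1) * (x 0 : ℂ) * (x 2 : ℂ)^2 * RL.nf x^3 * (γ:ℂ) * (pd 1 (f)) x) + ((-1) * (x 0 : ℂ) * (x 1 : ℂ)^2 * RL.nf x^3 * (γ:ℂ) * (pd 1 (f)) x) + ((-1) * (x 0 : ℂ)^3 * RL.nf x^3 * (γ:ℂ) * (pd 1 (f)) x) + ((x 0 : ℂ) * (pd 1 (pd 1 (pd 1 (f)))) x) + ((x 0 : ℂ) * (pd 1 (pd 2 (pd 2 (f)))) x)) * hI
  · rw [RL.R3_eq γ f, RL.R2_eq γ f, RL.L1_eq f]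
    simp only [R2, R3, Tsch, L1, L2, L3, h2, h1, RL.pot_eq, RL.potR_eq]
    simp [RL.ev, RL.pdE, RL.pdl, RL.c, RL.eR1, RL.eR2, RL.eR3, RL.eL1, RL.eL2, RL.eL3]
    simp only [hs_10, hs_20, hs_21, hs_010, hs_020, hs_021, hs_100, hs_101, hs_102, hs_110, hs_120, hs_121, hs_200, hs_201, hs_202, hs_210, hs_211, hs_212, hs_220, hs_221, hs_0010, hs_0020, hs_0021, hs_0100, hs_0101, hs_0102, hs_0110, hs_0120, hs_0121, hs_0200, hs_0201, hs_0202, hs_0210, hs_0211, hs_0212, hs_0220, hs_0221, hs_1000, hs_1001, hs_1002, hs_1010, hs_1011, hs_1012, hs_1020, hs_1021, hs_1022, hs_1100, hs_1101, hs_1102, hs_1110, hs_1120, hs_1121, hs_1200, hs_1201, hs_1202, hs_1210, hs_1211, hs_1212, hs_1220, hs_1221, hs_2000, hs_2001, hs_2002, hs_2010, hs_2011, hs_2012, hs_2020, hs_2021, hs_2022, hs_2100, hs_2101, hs_2102, hs_2110, hs_2111, hs_2112, hs_2120, hs_2121, hs_2122, hs_2200, hs_2201, hs_2202, hs_2210,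 hs_2211, hs_2212, hs_2220, hs_2221]
    linear_combination (((-1) * (x 2 : ℂ) * RL.nf x * (γ:ℂ) * (pd 1 (f)) x) + ((x 1 : ℂ) * RL.nf x * (γ:ℂ) * (pd 2 (f)) x)) * hrel + (((-1) * (x 2 : ℂ) * (pd 0 (pd 0 (pd 1 (f)))) x) + ((x 1 : ℂ) * (pd 0 (pd 0 (pd 2 (f)))) x) + ((-3) * (x 2 : ℂ) * RL.nf x * (γ:ℂ) * (pd 1 (f)) x) + ((x 2 : ℂ)^3 * RL.nf x^3 * (γ:ℂ) * (pd 1 (f)) x) + ((x 1 : ℂ)^2 * (x 2 : ℂ) * RL.nf x^3 * (γ:ℂ) * (pd 1 (f)) x) + ((x 0 : ℂ)^2 * (x 2 : ℂ) * RL.nf x^3 * (γ:ℂ) * (pd 1 (f)) x) + ((-1) * (x 2 : ℂ) * (pd 1 (pd 1 (pd 1 (f)))) x) + ((x 1 : ℂ) * (pd 1 (pd 1 (pd 2 (f)))) x) + ((-1) * (x 2 : ℂ) * (pd 1 (pd 2 (pd 2 (f)))) x) + ((3) * (x 1 : ℂ) * RL.nf x * (γ:ℂ) * (pd 2 (f))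 x) + ((-1) * (x 1 : ℂ) * (x 2 : ℂ)^2 * RL.nf x^3 * (γ:ℂ) * (pd 2 (f)) x) + ((-1) * (x 1 : ℂ)^3 * RL.nf x^3 * (γ:ℂ) * (pd 2 (f)) x) + ((-1) * (x 0 : ℂ)^2 * (x 1 : ℂ) * RL.nf x^3 * (γ:ℂ) * (pd 2 (f)) x) + ((x 1 : ℂ) * (pd 2 (pd 2 (pd 2 (f)))) x)) * hI
  · rw [RL.R1_eq γ f, RL.R3_eq γ f, RL.L2_eq f]
    simp only [R3, R1, Tsch, L1, L2, L3, h2, h1, RL.pot_eq, RL.potR_eq]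
    simp [RL.ev, RL.pdE, RL.pdl, RL.c, RL.eR1, RL.eR2, RL.eR3, RL.eL1, RL.eL2, RL.eL3]
    simp only [hs_10, hs_20, hs_21, hs_010, hs_020, hs_021, hs_100, hs_101, hs_102, hs_110, hs_120, hs_121, hs_200, hs_201, hs_202, hs_210, hs_211, hs_212, hs_220, hs_221, hs_0010, hs_0020, hs_0021, hs_0100, hs_0101, hs_0102, hs_0110, hs_0120, hs_0121, hs_0200, hs_0201, hs_0202, hs_0210, hs_0211, hs_0212, hs_0220, hs_0221, hs_1000, hs_1001, hs_1002, hs_1010, hs_1011, hs_1012, hs_1020, hs_1021, hs_1022, hs_1100, hs_1101, hs_1102, hs_1110, hs_1120, hs_1121, hs_1200, hs_1201, hs_1202, hs_1210, hs_1211, hs_1212, hs_1220, hs_1221, hs_2000, hs_2001, hs_2002, hs_2010, hs_2011, hs_2012, hs_2020, hs_2021, hs_2022, hs_2100, hs_2101, hs_2102, hs_2110, hs_2111, hs_2112, hs_2120, hs_2121, hs_2122, hs_2200, hs_2201, hs_2202, hs_2210, hs_2211, hs_2212, hs_2220, hs_2221]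
    linear_combination (((x 2 : ℂ) * RL.nf x * (γ:ℂ) * (pd 0 (f)) x) + ((-1) * (x 0 : ℂ) * RL.nf x * (γ:ℂ) * (pd 2 (f)) x)) * hrel + (((3) * (x 2 : ℂ) * RL.nf x * (γ:ℂ) * (pd 0 (f)) x) + ((-1) * (x 2 : ℂ)^3 * RL.nf x^3 * (γ:ℂ) * (pd 0 (f)) x) + ((-1) * (x 1 : ℂ)^2 * (x 2 : ℂ) * RL.nf x^3 * (γ:ℂ) * (pd 0 (f)) x) + ((-1) * (x 0 : ℂ)^2 * (x 2 : ℂ) * RL.nf x^3 * (γ:ℂ) * (pd 0 (f)) x) + ((x 2 : ℂ) * (pd 0 (pd 0 (pd 0 (f)))) x) + ((-1) * (x 0 : ℂ) * (pd 0 (pd 0 (pd 2 (f)))) x) + ((x 2 : ℂ) * (pd 0 (pd 1 (pd 1 (f)))) x) + ((x 2 : ℂ) * (pd 0 (pd 2 (pd 2 (f)))) x) + ((-1) * (x 0 : ℂ) * (pd 1 (pd 1 (pd 2 (f)))) x) + ((-3) * (x 0 : ℂ) * RL.nf x * (γ:ℂ) * (pd 2 (f)) x) + ((x 0 : ℂ)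 * (x 2 : ℂ)^2 * RL.nf x^3 * (γ:ℂ) * (pd 2 (f)) x) + ((x 0 : ℂ) * (x 1 : ℂ)^2 * RL.nf x^3 * (γ:ℂ) * (pd 2 (f)) x) + ((x 0 : ℂ)^3 * RL.nf x^3 * (γ:ℂ) * (pd 2 (f)) x) + ((-1) * (x 0 : ℂ) * (pd 2 (pd 2 (pd 2 (f)))) x)) * hI
end
end

section
/- For every smooth function f : ℝ³∖{0} → ℂ and every x ≠ 0, one has T(L₁(L₁f) + L₂(L₂f) + L₃(L₃f))(x) − (R₁(R₁f) + R₂(R₂f) + R₃(R₃f))(x) = T f(x) + γ² f(x); that is, the Casimir element T L² − R² acts as the operator T + γ²·Id on smooth functions on ℝ³∖{0}. -/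
noncomputable section

open ContDiff

namespace CasimirAux

open ContDiff

def S : Set E3 := {x : E3 | x ≠ 0}

lemma isOpen_S : IsOpen S := isOpen_ne

lemma mem_nhds_S {x : E3} (hx : x ∈ S) : S ∈ nhds x := isOpen_S.mem_nhds hx

lemma one_le_inf : (1 : WithTop ℕ∞) ≤ ∞ := by exact_mod_cast le_top
lemma two_le_inf : (2 : WithTop ℕ∞) ≤ ∞ := by
  rw [show ((2 : WithTop ℕ∞)) = ((2 : ℕ∞) : WithTop ℕ∞) by rfl]
  exact WithTop.coe_le_coe.2 le_top
lemma inf_add_one_le : (∞ + 1 : WithTop ℕ∞) ≤ ∞ := le_of_eq rfl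

variable {f g h : E3 → ℂ} {x : E3} {i j : Fin 3}

lemma pd_congr (hg : g =ᶠ[nhds x] h) : pd i g x = pd i h x := by
  unfold pd; rw [hg.fderiv_eq]

lemma pd_congr_on (hgh : ∀ y ∈ S, g y = h y) (hx : x ∈ S) : pd i g x = pd i h x :=
  pd_congr (Filter.eventuallyEq_of_mem (mem_nhds_S hx) hgh)

lemma pd_add (hg : DifferentiableAt ℝ g x) (hh : DifferentiableAt ℝ h x) :
    pd i (fun y => g y + h y) x = pd i g x + pd i h x := by
  unfold pd; rw [fderiv_fun_add hg hh]; simp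

lemma pd_mul (hg : DifferentiableAt ℝ g x) (hh : DifferentiableAt ℝ h x) :
    pd i (fun y => g y * h y) x = pd i g x * h x + g x * pd i h x := by
  unfold pd; rw [fderiv_fun_mul hg hh]; simp; ring

lemma pd_const (c : ℂ) : pd i (fun _ : E3 => c) x = 0 := by
  unfold pd; simp

def coordCLM (j : Fin 3) : E3 →L[ℝ] ℂ := Complex.ofRealCLM.comp (EuclideanSpace.proj j)

lemma pd_coord : pd i (fun y : E3 => ((y j : ℝ) : ℂ)) x = if i = j then 1 else 0 := by
  have h : (fun y : E3 => ((y j : ℝ) : ℂ)) = coordCLM j := rfl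
  unfold pd
  rw [h, ContinuousLinearMap.fderiv]
  rcases eq_or_ne i j with rfl | hne
  · simp [coordCLM, EuclideanSpace.single_apply]
  · simp [coordCLM, EuclideanSpace.single_apply, hne, Ne.symm hne]

lemma hasFDerivAt_norm' (hx : x ≠ 0) :
    HasFDerivAt (fun y : E3 => ‖y‖) ((1 / (2 * ‖x‖)) • (2 • innerSL ℝ x)) x := by
  have h1 : HasFDerivAt (fun y : E3 => ‖y‖ ^ 2) (2 • innerSL ℝ x) x :=
    (hasStrictFDerivAt_norm_sq x).hasFDerivAt
  have hx2 : ‖x‖ ^ 2 ≠ 0 := pow_ne_zero 2 (norm_ne_zero_iff.2 hx)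
  have h2 := h1.sqrt hx2
  have hfun : (fun y : E3 => Real.sqrt (‖y‖ ^ 2)) = fun y : E3 => ‖y‖ := by
    funext y; exact Real.sqrt_sq (norm_nonneg y)
  rw [hfun] at h2
  rwa [Real.sqrt_sq (norm_nonneg x)] at h2

lemma pd_invnorm (hx : x ≠ 0) :
    pd i (fun y : E3 => ((‖y‖⁻¹ : ℝ) : ℂ)) x
      = -1 * (((x i : ℝ) : ℂ) * (((‖x‖⁻¹ : ℝ) : ℂ) * (((‖x‖⁻¹ : ℝ) : ℂ) * ((‖x‖⁻¹ : ℝ) : ℂ)))) := by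
  have hn : ‖x‖ ≠ 0 := norm_ne_zero_iff.2 hx
  have h3 := (hasDerivAt_inv hn).comp_hasFDerivAt x (hasFDerivAt_norm' hx)
  have h4 := Complex.ofRealCLM.hasFDerivAt.comp x h3
  have h4' : HasFDerivAt (fun y : E3 => ((‖y‖⁻¹ : ℝ) : ℂ))
      (Complex.ofRealCLM.comp (-(‖x‖ ^ 2)⁻¹ • ((1 / (2 * ‖x‖)) • (2 • innerSL ℝ x)))) x := h4
  have h5 : pd i (fun y : E3 => ((‖y‖⁻¹ : ℝ) : ℂ)) x
      = Complex.ofRealCLM ((-(‖x‖ ^ 2)⁻¹ • ((1 / (2 * ‖x‖)) • (2 • innerSL ℝ x)))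
          (EuclideanSpace.single i 1)) := by
    unfold pd
    rw [h4'.fderiv]
    rfl
  rw [h5]
  simp only [ContinuousLinearMap.smul_apply, smul_eq_mul, innerSL_apply_apply, Complex.ofRealCLM_apply]
  have hinner : (inner ℝ x (EuclideanSpace.single i (1:ℝ)) : ℝ) = x i := by
    rw [EuclideanSpace.inner_single_right]
    simp
  rw [hinner]
  push_cast
  field_simp
  ring


lemma pd_comm (hg : ContDiffOn ℝ ∞ g S) (hx : x ∈ S) :
    pd i (pd j g) x = pd j (pd i g) x := by
  have hca : ContDiffAt ℝ ∞ g x := hg.contDiffAt (mem_nhds_S hx)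
  have hd : DifferentiableAt ℝ (fderiv ℝ g) x :=
    (hca.fderiv_right inf_add_one_le).differentiableAt (by simp)
  have hsymm : IsSymmSndFDerivAt ℝ g x := hca.isSymmSndFDerivAt (by rw [minSmoothness_of_isRCLikeNormedField]; exact two_le_inf)
  have hpd : ∀ v w : E3, fderiv ℝ (fun y => fderiv ℝ g y w) x v = fderiv ℝ (fderiv ℝ g) x v w := by
    intro v w
    have h1 : fderiv ℝ (fun y => fderiv ℝ g y w) x = (fderiv ℝ (fderiv ℝ g) x).flip w := by
      have h2 := fderiv_clm_apply (c := fderiv ℝ g) (u := fun _ => w) hd (differentiableAt_const w)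
      simpa using h2
    rw [h1]
    rfl
  show fderiv ℝ (fun y => fderiv ℝ g y (EuclideanSpace.single j 1)) x (EuclideanSpace.single i 1)
      = fderiv ℝ (fun y => fderiv ℝ g y (EuclideanSpace.single i 1)) x (EuclideanSpace.single j 1)
  rw [hpd, hpd]
  exact hsymm _ _

lemma contDiffOn_pd (hg : ContDiffOn ℝ ∞ g S) : ContDiffOn ℝ ∞ (pd i g) S := by
  have h := (hg.fderiv_of_isOpen isOpen_S inf_add_one_le).clm_apply
    (contDiffOn_const (c := EuclideanSpace.single i (1:ℝ)))
  exact h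

lemma contDiffOn_invnorm : ContDiffOn ℝ ∞ (fun y : E3 => ((‖y‖⁻¹ : ℝ) : ℂ)) S := by
  intro y hy
  have hy' : (y : E3) ≠ 0 := hy
  have h1 : ContDiffAt ℝ ∞ (fun y : E3 => ‖y‖⁻¹) y :=
    (contDiffAt_norm (𝕜 := ℝ) hy').inv (norm_ne_zero_iff.2 hy')
  exact (Complex.ofRealCLM.contDiff.contDiffAt.comp y h1).contDiffWithinAt

inductive Ex : Type
  | X : Fin 3 → Ex
  | U : Ex
  | Dv : List (Fin 3) → Ex
  | C : ℂ → Ex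
  | add : Ex → Ex → Ex
  | mul : Ex → Ex → Ex

def iterPD : List (Fin 3) → (E3 → ℂ) → E3 → ℂ
  | [], f => f
  | i :: l, f => pd i (iterPD l f)

def eval (f : E3 → ℂ) : Ex → E3 → ℂ
  | .X j => fun y => ((y j : ℝ) : ℂ)
  | .U => fun y => ((‖y‖⁻¹ : ℝ) : ℂ)
  | .Dv l => iterPD l f
  | .C c => fun _ => c
  | .add a b => fun y => eval f a y + eval f b y
  | .mul a b => fun y => eval f a y * eval f b y

def insertS (i : Fin 3) : List (Fin 3) → List (Fin 3)
  | [] => [i]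
  | j :: l => if i ≤ j then i :: j :: l else j :: insertS i l

def Der (i : Fin 3) : Ex → Ex
  | .X j => .C (if i = j then 1 else 0)
  | .U => .mul (.C (-1)) (.mul (.X i) (.mul .U (.mul .U .U)))
  | .Dv l => .Dv (insertS i l)
  | .C _ => .C 0
  | .add a b => .add (Der i a) (Der i b)
  | .mul a b => .add (.mul (Der i a) b) (.mul a (Der i b))

lemma contDiffOn_iterPD (hf : ContDiffOn ℝ ∞ f S) :
    ∀ l : List (Fin 3), ContDiffOn ℝ ∞ (iterPD l f) S
  | [] => hf
  | i :: l => contDiffOn_pd (contDiffOn_iterPD hf l)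

lemma contDiffOn_eval (hf : ContDiffOn ℝ ∞ f S) : ∀ e : Ex, ContDiffOn ℝ ∞ (eval f e) S
  | .X j => by
      have : ContDiff ℝ ∞ (fun y : E3 => ((y j : ℝ) : ℂ)) := (coordCLM j).contDiff
      exact this.contDiffOn
  | .U => contDiffOn_invnorm
  | .Dv l => contDiffOn_iterPD hf l
  | .C c => contDiffOn_const
  | .add a b => (contDiffOn_eval hf a).add (contDiffOn_eval hf b)
  | .mul a b => (contDiffOn_eval hf a).mul (contDiffOn_eval hf b)

lemma diffAt_eval (hf : ContDiffOn ℝ ∞ f S) (e : Ex) (hx : x ∈ S) :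
    DifferentiableAt ℝ (eval f e) x :=
  ((contDiffOn_eval hf e).contDiffAt (mem_nhds_S hx)).differentiableAt (by simp)

lemma pd_iterPD (hf : ContDiffOn ℝ ∞ f S) (i : Fin 3) :
    ∀ l : List (Fin 3), ∀ x ∈ S, pd i (iterPD l f) x = iterPD (insertS i l) f x
  | [] => fun x _ => rfl
  | j :: l => fun x hx => by
      rw [insertS]
      by_cases hij : i ≤ j
      · rw [if_pos hij]; rfl
      · rw [if_neg hij]
        have h1 : pd i (iterPD (j :: l) f) x = pd j (pd i (iterPD l f)) x :=
          pd_comm (contDiffOn_iterPD hf l) hx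
        rw [h1]
        exact pd_congr_on (fun y hy => pd_iterPD hf i l y hy) hx

lemma pd_eval (hf : ContDiffOn ℝ ∞ f S) :
    ∀ (e : Ex) (i : Fin 3), ∀ x ∈ S, pd i (eval f e) x = eval f (Der i e) x
  | .X j => fun i x hx => by
      rw [show eval f (.X j) = fun y : E3 => ((y j : ℝ) : ℂ) from rfl, pd_coord]; rfl
  | .U => fun i x hx => by
      rw [show eval f .U = fun y : E3 => ((‖y‖⁻¹ : ℝ) : ℂ) from rfl, pd_invnorm hx]; rfl
  | .Dv l => fun i x hx => pd_iterPD hf i l x hx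
  | .C c => fun i x hx => pd_const c
  | .add a b => fun i x hx => by
      rw [show eval f (.add a b) = fun y => eval f a y + eval f b y from rfl,
        pd_add (diffAt_eval hf a hx) (diffAt_eval hf b hx),
        pd_eval hf a i x hx, pd_eval hf b i x hx]
      rfl
  | .mul a b => fun i x hx => by
      rw [show eval f (.mul a b) = fun y => eval f a y * eval f b y from rfl,
        pd_mul (diffAt_eval hf a hx) (diffAt_eval hf b hx),
        pd_eval hf a i x hx, pd_eval hf b i x hx]
      rfl


variable {γ : ℝ}

def sL1 (e : Ex) : Ex := .add (.mul (.X 1) (Der 2 e)) (.mul (.C (-1)) (.mul (.X 2) (Der 1 e)))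
def sL2 (e : Ex) : Ex := .add (.mul (.X 2) (Der 0 e)) (.mul (.C (-1)) (.mul (.X 0) (Der 2 e)))
def sL3 (e : Ex) : Ex := .add (.mul (.X 0) (Der 1 e)) (.mul (.C (-1)) (.mul (.X 1) (Der 0 e)))

def sR1 (γ : ℝ) (e : Ex) : Ex :=
  .mul (.C Complex.I) (.add (.add (.add (sL3 (Der 1 e)) (.mul (.C (-1)) (sL2 (Der 2 e))))
    (.mul (.C (-1)) (Der 0 e))) (.mul (.C ((γ : ℝ) : ℂ)) (.mul (.X 0) (.mul .U e))))
def sR2 (γ : ℝ) (e : Ex) : Ex :=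
  .mul (.C Complex.I) (.add (.add (.add (sL1 (Der 2 e)) (.mul (.C (-1)) (sL3 (Der 0 e))))
    (.mul (.C (-1)) (Der 1 e))) (.mul (.C ((γ : ℝ) : ℂ)) (.mul (.X 1) (.mul .U e))))
def sR3 (γ : ℝ) (e : Ex) : Ex :=
  .mul (.C Complex.I) (.add (.add (.add (sL2 (Der 0 e)) (.mul (.C (-1)) (sL1 (Der 1 e))))
    (.mul (.C (-1)) (Der 2 e))) (.mul (.C ((γ : ℝ) : ℂ)) (.mul (.X 2) (.mul .U e))))
def sT (γ : ℝ) (e : Ex) : Ex :=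
  .add (.mul (.C (-1)) (.add (.add (Der 0 (Der 0 e)) (Der 1 (Der 1 e))) (Der 2 (Der 2 e))))
    (.mul (.C ((-2) * ((γ : ℝ) : ℂ))) (.mul .U e))

lemma hg_pd (hf : ContDiffOn ℝ ∞ f S) {g : E3 → ℂ} {e : Ex}
    (hg : ∀ y ∈ S, g y = eval f e y) (i : Fin 3) :
    ∀ y ∈ S, pd i g y = eval f (Der i e) y := fun y hy =>
  (pd_congr_on hg hy).trans (pd_eval hf e i y hy)

lemma eval_L1 (hf : ContDiffOn ℝ ∞ f S) {g : E3 → ℂ} {e : Ex}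
    (hg : ∀ y ∈ S, g y = eval f e y) (hx : x ∈ S) :
    L1 g x = eval f (sL1 e) x := by
  unfold L1
  rw [hg_pd hf hg 1 x hx, hg_pd hf hg 2 x hx]
  simp only [sL1, eval]
  ring

lemma eval_L2 (hf : ContDiffOn ℝ ∞ f S) {g : E3 → ℂ} {e : Ex}
    (hg : ∀ y ∈ S, g y = eval f e y) (hx : x ∈ S) :
    L2 g x = eval f (sL2 e) x := by
  unfold L2
  rw [hg_pd hf hg 0 x hx, hg_pd hf hg 2 x hx]
  simp only [sL2, eval]
  ring

lemma eval_L3 (hf : ContDiffOn ℝ ∞ f S) {g : E3 → ℂ} {e : Ex}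
    (hg : ∀ y ∈ S, g y = eval f e y) (hx : x ∈ S) :
    L3 g x = eval f (sL3 e) x := by
  unfold L3
  rw [hg_pd hf hg 0 x hx, hg_pd hf hg 1 x hx]
  simp only [sL3, eval]
  ring

lemma eval_R1 (hf : ContDiffOn ℝ ∞ f S) {g : E3 → ℂ} {e : Ex}
    (hg : ∀ y ∈ S, g y = eval f e y) (hx : x ∈ S) :
    R1 γ g x = eval f (sR1 γ e) x := by
  unfold R1
  rw [eval_L3 hf (hg_pd hf hg 1) hx, eval_L2 hf (hg_pd hf hg 2) hx,
    hg_pd hf hg 0 x hx, hg x hx]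
  simp only [sR1, sL2, sL3, eval]
  push_cast
  ring

lemma eval_R2 (hf : ContDiffOn ℝ ∞ f S) {g : E3 → ℂ} {e : Ex}
    (hg : ∀ y ∈ S, g y = eval f e y) (hx : x ∈ S) :
    R2 γ g x = eval f (sR2 γ e) x := by
  unfold R2
  rw [eval_L1 hf (hg_pd hf hg 2) hx, eval_L3 hf (hg_pd hf hg 0) hx,
    hg_pd hf hg 1 x hx, hg x hx]
  simp only [sR2, sL1, sL3, eval]
  push_cast
  ring

lemma eval_R3 (hf : ContDiffOn ℝ ∞ f S) {g : E3 → ℂ} {e : Ex}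
    (hg : ∀ y ∈ S, g y = eval f e y) (hx : x ∈ S) :
    R3 γ g x = eval f (sR3 γ e) x := by
  unfold R3
  rw [eval_L2 hf (hg_pd hf hg 0) hx, eval_L1 hf (hg_pd hf hg 1) hx,
    hg_pd hf hg 2 x hx, hg x hx]
  simp only [sR3, sL1, sL2, eval]
  push_cast
  ring

lemma eval_T (hf : ContDiffOn ℝ ∞ f S) {g : E3 → ℂ} {e : Ex}
    (hg : ∀ y ∈ S, g y = eval f e y) (hx : x ∈ S) :
    Tsch γ g x = eval f (sT γ e) x := by
  have hii : ∀ i : Fin 3, pd i (pd i g) x = eval f (Der i (Der i e)) x := fun i =>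
    (pd_congr_on (hg_pd hf hg i) hx).trans (pd_eval hf (Der i e) i x hx)
  unfold Tsch
  rw [hii 0, hii 1, hii 2, hg x hx]
  simp only [sT, eval]
  push_cast
  ring

end CasimirAux

open CasimirAux

set_option maxHeartbeats 4000000 in
/-- The Casimir element `T L² − R²` acts as the operator `T + γ²·Id` on smooth functions
on `ℝ³ ∖ {0}`. -/
theorem casimir_acts_as_T_plus_gamma_sq
    (γ : ℝ) (hγ : 0 < γ)
    (f : E3 → ℂ) (hf : ContDiffOn ℝ (⊤ : ℕ∞) f {x : E3 | x ≠ 0})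
    (x : E3) (hx : x ≠ 0) :
    Tsch γ (fun y => L1 (L1 f) y + L2 (L2 f) y + L3 (L3 f) y) x
      - (R1 γ (R1 γ f) x + R2 γ (R2 γ f) x + R3 γ (R3 γ f) x)
    = Tsch γ f x + (γ : ℂ) ^ 2 * f x := by
  have hf' : ContDiffOn ℝ (((⊤ : ℕ∞)) : WithTop ℕ∞) f S := hf.of_le (by simp)
  have hx' : x ∈ S := hx
  have e0 : ∀ y ∈ S, f y = eval f (.Dv []) y := fun y _ => rfl
  have hL1 : ∀ y ∈ S, L1 f y = eval f (sL1 (.Dv [])) y := fun y hy => eval_L1 hf' e0 hy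
  have hL2 : ∀ y ∈ S, L2 f y = eval f (sL2 (.Dv [])) y := fun y hy => eval_L2 hf' e0 hy
  have hL3 : ∀ y ∈ S, L3 f y = eval f (sL3 (.Dv [])) y := fun y hy => eval_L3 hf' e0 hy
  have hL11 : ∀ y ∈ S, L1 (L1 f) y = eval f (sL1 (sL1 (.Dv []))) y :=
    fun y hy => eval_L1 hf' hL1 hy
  have hL22 : ∀ y ∈ S, L2 (L2 f) y = eval f (sL2 (sL2 (.Dv []))) y :=
    fun y hy => eval_L2 hf' hL2 hy
  have hL33 : ∀ y ∈ S, L3 (L3 f) y = eval f (sL3 (sL3 (.Dv []))) y :=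
    fun y hy => eval_L3 hf' hL3 hy
  have hSum : ∀ y ∈ S, L1 (L1 f) y + L2 (L2 f) y + L3 (L3 f) y
      = eval f (.add (.add (sL1 (sL1 (.Dv []))) (sL2 (sL2 (.Dv [])))) (sL3 (sL3 (.Dv [])))) y :=
    fun y hy => by rw [hL11 y hy, hL22 y hy, hL33 y hy]; rfl
  have hT : Tsch γ (fun y => L1 (L1 f) y + L2 (L2 f) y + L3 (L3 f) y) x
      = eval f (sT γ (.add (.add (sL1 (sL1 (.Dv []))) (sL2 (sL2 (.Dv [])))) (sL3 (sL3 (.Dv []))))) x :=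
    eval_T hf' hSum hx'
  have hR1 : ∀ y ∈ S, R1 γ f y = eval f (sR1 γ (.Dv [])) y := fun y hy => eval_R1 hf' e0 hy
  have hR2 : ∀ y ∈ S, R2 γ f y = eval f (sR2 γ (.Dv [])) y := fun y hy => eval_R2 hf' e0 hy
  have hR3 : ∀ y ∈ S, R3 γ f y = eval f (sR3 γ (.Dv [])) y := fun y hy => eval_R3 hf' e0 hy
  have hR11 : R1 γ (R1 γ f) x = eval f (sR1 γ (sR1 γ (.Dv []))) x := eval_R1 hf' hR1 hx'
  have hR22 : R2 γ (R2 γ f) x = eval f (sR2 γ (sR2 γ (.Dv []))) x := eval_R2 hf' hR2 hx'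
  have hR33 : R3 γ (R3 γ f) x = eval f (sR3 γ (sR3 γ (.Dv []))) x := eval_R3 hf' hR3 hx'
  have hTf : Tsch γ f x = eval f (sT γ (.Dv [])) x := eval_T hf' e0 hx'
  rw [hT, hR11, hR22, hR33, hTf]
  have hxn : ‖x‖ ≠ 0 := norm_ne_zero_iff.2 hx
  have hnz : ((‖x‖ : ℝ) : ℂ) ≠ 0 := Complex.ofReal_ne_zero.2 hxn
  have hn : (x 0)^2 + (x 1)^2 + (x 2)^2 = ‖x‖^2 := by
    rw [EuclideanSpace.norm_eq, Real.sq_sqrt (by positivity)]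
    simp [Fin.sum_univ_three, Real.norm_eq_abs, sq_abs]
  have hs : ((x 0 : ℂ)^2 + (x 1 : ℂ)^2 + (x 2 : ℂ)^2) * ((‖x‖⁻¹ : ℝ) : ℂ)^2 = 1 := by
    push_cast
    field_simp
    exact_mod_cast hn
  have hI : Complex.I ^ 2 = -1 := Complex.I_sq
  simp only [sT, sL1, sL2, sL3, sR1, sR2, sR3, Der, insertS, eval, iterPD, Fin.reduceEq, Fin.reduceLE, reduceIte]
  linear_combination
    ((1 : ℂ) * (pd 0 (pd 0 f)) x +
      (1 : ℂ) * (pd 1 (pd 1 f)) x +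
      (1 : ℂ) * (pd 2 (pd 2 f)) x +
      (3 : ℂ) * ((‖x‖⁻¹ : ℝ) : ℂ) * (γ:ℂ) * f x +
      (2 : ℂ) * (x 2 : ℂ) * (pd 0 (pd 0 (pd 2 f))) x +
      (2 : ℂ) * (x 2 : ℂ) * (pd 1 (pd 1 (pd 2 f))) x +
      (2 : ℂ) * (x 2 : ℂ) * (pd 2 (pd 2 (pd 2 f))) x +
      (4 : ℂ) * (x 2 : ℂ) * ((‖x‖⁻¹ : ℝ) : ℂ) * (γ:ℂ) * pd 2 f x +
      (-1 : ℂ) * (x 2 : ℂ)^2 * (pd 0 (pd 0 (pd 0 (pd 0 f)))) x +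
      (-2 : ℂ) * (x 2 : ℂ)^2 * (pd 0 (pd 0 (pd 1 (pd 1 f)))) x +
      (-1 : ℂ) * (x 2 : ℂ)^2 * (pd 0 (pd 0 (pd 2 (pd 2 f)))) x +
      (-1 : ℂ) * (x 2 : ℂ)^2 * (pd 1 (pd 1 (pd 1 (pd 1 f)))) x +
      (-1 : ℂ) * (x 2 : ℂ)^2 * (pd 1 (pd 1 (pd 2 (pd 2 f)))) x +
      (-2 : ℂ) * (x 2 : ℂ)^2 * ((‖x‖⁻¹ : ℝ) : ℂ) * (γ:ℂ) * (pd 0 (pd 0 f)) x +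
      (-2 : ℂ) * (x 2 : ℂ)^2 * ((‖x‖⁻¹ : ℝ) : ℂ) * (γ:ℂ) * (pd 1 (pd 1 f)) x +
      (-1 : ℂ) * (x 2 : ℂ)^2 * ((‖x‖⁻¹ : ℝ) : ℂ)^2 * (γ:ℂ)^2 * f x +
      (-1 : ℂ) * (x 2 : ℂ)^2 * ((‖x‖⁻¹ : ℝ) : ℂ)^3 * (γ:ℂ) * f x +
      (2 : ℂ) * (x 1 : ℂ) * (pd 0 (pd 0 (pd 1 f))) x +
      (2 : ℂ) * (x 1 : ℂ) * (pd 1 (pd 1 (pd 1 f))) x +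
      (2 : ℂ) * (x 1 : ℂ) * (pd 1 (pd 2 (pd 2 f))) x +
      (4 : ℂ) * (x 1 : ℂ) * ((‖x‖⁻¹ : ℝ) : ℂ) * (γ:ℂ) * pd 1 f x +
      (2 : ℂ) * (x 1 : ℂ) * (x 2 : ℂ) * (pd 0 (pd 0 (pd 1 (pd 2 f)))) x +
      (2 : ℂ) * (x 1 : ℂ) * (x 2 : ℂ) * (pd 1 (pd 1 (pd 1 (pd 2 f)))) x +
      (2 : ℂ) * (x 1 : ℂ) * (x 2 : ℂ) * (pd 1 (pd 2 (pd 2 (pd 2 f)))) x +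
      (4 : ℂ) * (x 1 : ℂ) * (x 2 : ℂ) * ((‖x‖⁻¹ : ℝ) : ℂ) * (γ:ℂ) * (pd 1 (pd 2 f)) x +
      (-1 : ℂ) * (x 1 : ℂ)^2 * (pd 0 (pd 0 (pd 0 (pd 0 f)))) x +
      (-1 : ℂ) * (x 1 : ℂ)^2 * (pd 0 (pd 0 (pd 1 (pd 1 f)))) x +
      (-2 : ℂ) * (x 1 : ℂ)^2 * (pd 0 (pd 0 (pd 2 (pd 2 f)))) x +
      (-1 : ℂ) * (x 1 : ℂ)^2 * (pd 1 (pd 1 (pd 2 (pd 2 f)))) x +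
      (-1 : ℂ) * (x 1 : ℂ)^2 * (pd 2 (pd 2 (pd 2 (pd 2 f)))) x +
      (-2 : ℂ) * (x 1 : ℂ)^2 * ((‖x‖⁻¹ : ℝ) : ℂ) * (γ:ℂ) * (pd 0 (pd 0 f)) x +
      (-2 : ℂ) * (x 1 : ℂ)^2 * ((‖x‖⁻¹ : ℝ) : ℂ) * (γ:ℂ) * (pd 2 (pd 2 f)) x +
      (-1 : ℂ) * (x 1 : ℂ)^2 * ((‖x‖⁻¹ : ℝ) : ℂ)^2 * (γ:ℂ)^2 * f x +
      (-1 : ℂ) * (x 1 : ℂ)^2 * ((‖x‖⁻¹ : ℝ) : ℂ)^3 * (γ:ℂ) * f x +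
      (2 : ℂ) * (x 0 : ℂ) * (pd 0 (pd 0 (pd 0 f))) x +
      (2 : ℂ) * (x 0 : ℂ) * (pd 0 (pd 1 (pd 1 f))) x +
      (2 : ℂ) * (x 0 : ℂ) * (pd 0 (pd 2 (pd 2 f))) x +
      (4 : ℂ) * (x 0 : ℂ) * ((‖x‖⁻¹ : ℝ) : ℂ) * (γ:ℂ) * pd 0 f x +
      (2 : ℂ) * (x 0 : ℂ) * (x 2 : ℂ) * (pd 0 (pd 0 (pd 0 (pd 2 f)))) x +
      (2 : ℂ) * (x 0 : ℂ) * (x 2 : ℂ) * (pd 0 (pd 1 (pd 1 (pd 2 f)))) x +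
      (2 : ℂ) * (x 0 : ℂ) * (x 2 : ℂ) * (pd 0 (pd 2 (pd 2 (pd 2 f)))) x +
      (4 : ℂ) * (x 0 : ℂ) * (x 2 : ℂ) * ((‖x‖⁻¹ : ℝ) : ℂ) * (γ:ℂ) * (pd 0 (pd 2 f)) x +
      (2 : ℂ) * (x 0 : ℂ) * (x 1 : ℂ) * (pd 0 (pd 0 (pd 0 (pd 1 f)))) x +
      (2 : ℂ) * (x 0 : ℂ) * (x 1 : ℂ) * (pd 0 (pd 1 (pd 1 (pd 1 f)))) x +
      (2 : ℂ) * (x 0 : ℂ) * (x 1 : ℂ) * (pd 0 (pd 1 (pd 2 (pd 2 f)))) x +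
      (4 : ℂ) * (x 0 : ℂ) * (x 1 : ℂ) * ((‖x‖⁻¹ : ℝ) : ℂ) * (γ:ℂ) * (pd 0 (pd 1 f)) x +
      (-1 : ℂ) * (x 0 : ℂ)^2 * (pd 0 (pd 0 (pd 1 (pd 1 f)))) x +
      (-1 : ℂ) * (x 0 : ℂ)^2 * (pd 0 (pd 0 (pd 2 (pd 2 f)))) x +
      (-1 : ℂ) * (x 0 : ℂ)^2 * (pd 1 (pd 1 (pd 1 (pd 1 f)))) x +
      (-2 : ℂ) * (x 0 : ℂ)^2 * (pd 1 (pd 1 (pd 2 (pd 2 f)))) x +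
      (-1 : ℂ) * (x 0 : ℂ)^2 * (pd 2 (pd 2 (pd 2 (pd 2 f)))) x +
      (-2 : ℂ) * (x 0 : ℂ)^2 * ((‖x‖⁻¹ : ℝ) : ℂ) * (γ:ℂ) * (pd 1 (pd 1 f)) x +
      (-2 : ℂ) * (x 0 : ℂ)^2 * ((‖x‖⁻¹ : ℝ) : ℂ) * (γ:ℂ) * (pd 2 (pd 2 f)) x +
      (-1 : ℂ) * (x 0 : ℂ)^2 * ((‖x‖⁻¹ : ℝ) : ℂ)^2 * (γ:ℂ)^2 * f x +
      (-1 : ℂ) * (x 0 : ℂ)^2 * ((‖x‖⁻¹ : ℝ) : ℂ)^3 * (γ:ℂ) * f x) * hI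
    + ((1 : ℂ) * (γ:ℂ)^2 * f x +
      (1 : ℂ) * ((‖x‖⁻¹ : ℝ) : ℂ) * (γ:ℂ) * f x) * hs
end
end

section
/- Let γ > 0, λ ∈ ℂ, and ℓ ∈ ℕ. There exists a unique entire function F : ℂ → ℂ such that z²F''(z) + 2zF'(z) − ℓ(ℓ+1)F(z) + 2γzF(z) + λz²F(z) = 0 for all z ∈ ℂ, the derivatives F^(j)(0) vanish for all j < ℓ, and F^(ℓ)(0) = ℓ! (equivalently, F has Taylor expansion F(z) = z^ℓ + higher-order terms at 0). -/
/-!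
Differentiating the equation `n` times at `0` turns it into the three-term recurrence
`(n(n+1) - ℓ(ℓ+1)) F⁽ⁿ⁾(0) + 2γ n F⁽ⁿ⁻¹⁾(0) + λ n(n-1) F⁽ⁿ⁻²⁾(0) = 0`. Its leading coefficient
vanishes only at `n = ℓ`, so the derivatives of order `≤ ℓ` determine all the others, and an
entire function is determined by its derivatives at `0`: this gives uniqueness. For existence,
solve the recurrence with the prescribed initial data. The Taylor coefficients `cₙ = F⁽ⁿ⁾(0)/n!`
then satisfy `(n+2) ‖cₙ₊₂‖ ≤ K (‖cₙ₊₁‖ + ‖cₙ‖)`, so for every `r` the terms `vₙ = ‖cₙ‖ rⁿ`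
eventually satisfy `vₙ₊₂ ≤ max vₙ₊₁ vₙ` and stay bounded. The power series is therefore entire,
and its sum solves the equation because every derivative of the left-hand side vanishes at `0`.
-/

open FormalMultilinearSeries
open scoped ContDiff

theorem Differentiable.eq_of_iteratedDeriv_eq {f g : ℂ → ℂ} (hf : Differentiable ℂ f)
    (hg : Differentiable ℂ g) (c : ℂ) (h : ∀ n, iteratedDeriv n f c = iteratedDeriv n g c) :
    f = g := by
  funext z
  refine (Complex.hasSum_taylorSeries_of_entire hf c z).unique ?_
  simpa only [h] using Complex.hasSum_taylorSeries_of_entire hg c z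

theorem exists_differentiable_iteratedDeriv_zero_eq (t : ℕ → ℂ)
    (ht : (ofScalars ℂ fun n ↦ t n / n.factorial).radius = ⊤) :
    ∃ F : ℂ → ℂ, Differentiable ℂ F ∧ ∀ n, iteratedDeriv n F 0 = t n := by
  set p := ofScalars ℂ fun n ↦ t n / n.factorial
  have hp : HasFPowerSeriesOnBall p.sum p 0 ⊤ := ht ▸ p.hasFPowerSeriesOnBall (by simp [ht])
  have hF : Differentiable ℂ p.sum := fun z ↦ (hp.analyticAt_of_mem (by simp)).differentiableAt
  refine ⟨p.sum, hF, fun n ↦ ?_⟩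
  have hcoeff := congrFun (ofScalars_series_injective ℂ ℂ
    (hp.hasFPowerSeriesAt.eq_formalMultilinearSeries (hF.analyticAt 0).hasFPowerSeriesAt)) n
  exact ((div_left_inj' (mod_cast n.factorial_ne_zero)).1 hcoeff).symm

theorem bddAbove_range_of_le_max {v : ℕ → ℝ} {N : ℕ}
    (h : ∀ n ≥ N, v (n + 2) ≤ max (v (n + 1)) (v n)) : BddAbove (Set.range v) := by
  refine ⟨(Finset.range (N + 2)).sup' Finset.nonempty_range_add_one v, ?_⟩
  rintro _ ⟨n, rfl⟩
  induction n using Nat.strong_induction_on with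
  | _ n ih =>
    rcases lt_or_ge n (N + 2) with hn | hn
    · exact Finset.le_sup' v (Finset.mem_range.2 hn)
    · obtain ⟨m, rfl⟩ : ∃ m, n = m + 2 := ⟨n - 2, by omega⟩
      exact (h m (by omega)).trans (max_le (ih _ (by omega)) (ih _ (by omega)))

theorem ofScalars_radius_eq_top_of_mul_norm_le {𝕜 : Type*} [NontriviallyNormedField 𝕜]
    (c : ℕ → 𝕜) {K : ℝ} (hK : 0 ≤ K) (N : ℕ)
    (h : ∀ n ≥ N, (n + 2) * ‖c (n + 2)‖ ≤ K * (‖c (n + 1)‖ + ‖c n‖)) :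
    (ofScalars 𝕜 c).radius = ⊤ := by
  refine ENNReal.eq_top_of_forall_nnreal_le fun r ↦ ?_
  set v : ℕ → ℝ := fun n ↦ ‖c n‖ * r ^ n
  have hv : ∀ n ≥ max N ⌈K * (r + r ^ 2)⌉₊, v (n + 2) ≤ max (v (n + 1)) (v n) := by
    intro n hn
    have hKr : K * (r + r ^ 2) ≤ n + 2 := by
      have := (Nat.le_ceil _).trans (Nat.cast_le.2 (le_of_max_le_right hn)); linarith
    refine le_of_mul_le_mul_left ?_ (by positivity : (0 : ℝ) < n + 2)
    calc (n + 2 : ℝ) * v (n + 2) = (n + 2) * ‖c (n + 2)‖ * r ^ (n + 2) := by ring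
      _ ≤ K * (‖c (n + 1)‖ + ‖c n‖) * r ^ (n + 2) := by
        gcongr ?_ * _; exact h n (le_of_max_le_left hn)
      _ = K * r * v (n + 1) + K * r ^ 2 * v n := by ring
      _ ≤ K * r * max (v (n + 1)) (v n) + K * r ^ 2 * max (v (n + 1)) (v n) := by
        gcongr
        exacts [le_max_left _ _, le_max_right _ _]
      _ ≤ (n + 2) * max (v (n + 1)) (v n) := by
        rw [← add_mul, ← mul_add]
        exact mul_le_mul_of_nonneg_right hKr ((by positivity : 0 ≤ v n).trans (le_max_right _ _))
  obtain ⟨C, hC⟩ := bddAbove_range_of_le_max hv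
  exact (ofScalars 𝕜 c).le_radius_of_bound C fun n ↦ by
    rw [ofScalars_norm]; exact hC ⟨n, rfl⟩

theorem iteratedDeriv_fun_pow_mul_zero {𝕜 : Type*} [NontriviallyNormedField 𝕜] {g : 𝕜 → 𝕜}
    {n : ℕ} (m : ℕ) (hg : ContDiffAt 𝕜 n g 0) :
    iteratedDeriv n (fun z ↦ z ^ m * g z) 0 = n.descFactorial m * iteratedDeriv (n - m) g 0 := by
  rw [iteratedDeriv_fun_mul (by fun_prop) hg]
  simp only [iteratedDeriv_fun_pow_zero, Nat.cast_ite, Nat.cast_zero, mul_ite, ite_mul, mul_zero,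
    zero_mul, Finset.sum_ite_eq', Finset.mem_range]
  split_ifs with hm
  · rw [Nat.descFactorial_eq_factorial_mul_choose]; push_cast; ring
  · rw [Nat.descFactorial_eq_zero_iff_lt.2 (by omega)]; simp

theorem iteratedDeriv_fun_pow_mul_iteratedDeriv_zero {𝕜 : Type*} [NontriviallyNormedField 𝕜]
    {f : 𝕜 → 𝕜} {n : ℕ} (m : ℕ) (hf : ContDiff 𝕜 ∞ f) :
    iteratedDeriv n (fun z ↦ z ^ m * iteratedDeriv m f z) 0
      = n.descFactorial m * iteratedDeriv n f 0 := by
  have hfm : ContDiff 𝕜 ∞ (iteratedDeriv m f) := by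
    rw [iteratedDeriv_eq_iterate]; exact hf.iterate_deriv m
  rw [iteratedDeriv_fun_pow_mul_zero m (hfm.of_le (by exact_mod_cast le_top)).contDiffAt]
  rcases le_or_gt m n with hmn | hmn
  · rw [iteratedDeriv_eq_iterate, iteratedDeriv_eq_iterate, iteratedDeriv_eq_iterate,
      ← Function.iterate_add_apply, Nat.sub_add_cancel hmn]
  · simp [Nat.descFactorial_eq_zero_iff_lt.2 hmn]

namespace RadialSchrodinger

variable (γ lam : ℂ) (ℓ : ℕ)

noncomputable def operator (F : ℂ → ℂ) (z : ℂ) : ℂ :=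
  z ^ 2 * deriv (deriv F) z + 2 * z * deriv F z - ((ℓ * (ℓ + 1) : ℕ) : ℂ) * F z
    + 2 * γ * z * F z + lam * z ^ 2 * F z

/-- The truncated subtractions `n - 1` and `n - 2` are harmless: they occur only where the factors
`n` and `n (n - 1)` vanish. -/
def recurrence (t : ℕ → ℂ) (n : ℕ) : ℂ :=
  (((n * (n + 1) : ℕ) : ℂ) - ((ℓ * (ℓ + 1) : ℕ) : ℂ)) * t n + 2 * γ * n * t (n - 1)
    + lam * ((n * (n - 1) : ℕ) : ℂ) * t (n - 2)

theorem indicial_ne_zero {n : ℕ} (h : ℓ < n) :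
    ((n * (n + 1) : ℕ) : ℂ) - ((ℓ * (ℓ + 1) : ℕ) : ℂ) ≠ 0 :=
  sub_ne_zero.2 <| Nat.cast_injective.ne (Nat.mul_lt_mul'' h (by omega)).ne'

variable {γ lam ℓ} in
theorem differentiable_operator {F : ℂ → ℂ} (hF : Differentiable ℂ F) :
    Differentiable ℂ (operator γ lam ℓ F) := by
  unfold operator; fun_prop

theorem iteratedDeriv_operator_zero {F : ℂ → ℂ} (hF : Differentiable ℂ F) (n : ℕ) :
    iteratedDeriv n (operator γ lam ℓ F) 0
      = recurrence γ lam ℓ (fun k ↦ iteratedDeriv k F 0) n := by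
  have hF1 := (hF.contDiff (n := 1 + 1)).differentiable_iteratedDeriv' 1
  have hF2 := (hF.contDiff (n := 2 + 1)).differentiable_iteratedDeriv' 2
  have hop : operator γ lam ℓ F = fun z ↦ z ^ 2 * iteratedDeriv 2 F z
      + 2 * (z ^ 1 * iteratedDeriv 1 F z) - ((ℓ * (ℓ + 1) : ℕ) : ℂ) * F z
      + 2 * γ * (z ^ 1 * F z) + lam * (z ^ 2 * F z) := by
    funext z
    simp only [operator, iteratedDeriv_succ, iteratedDeriv_zero]
    ring
  rw [hop, iteratedDeriv_fun_add, iteratedDeriv_fun_add, iteratedDeriv_fun_sub,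
    iteratedDeriv_fun_add, iteratedDeriv_const_mul, iteratedDeriv_const_mul,
    iteratedDeriv_const_mul, iteratedDeriv_const_mul,
    iteratedDeriv_fun_pow_mul_iteratedDeriv_zero 2 hF.contDiff,
    iteratedDeriv_fun_pow_mul_iteratedDeriv_zero 1 hF.contDiff,
    iteratedDeriv_fun_pow_mul_zero 1, iteratedDeriv_fun_pow_mul_zero 2]
  · rcases n with _ | n
    · simp [recurrence]
    · simp only [recurrence, Nat.descFactorial_succ, Nat.descFactorial_zero]
      push_cast
      ring
  all_goals exact (Differentiable.contDiff (by fun_prop)).contDiffAt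

variable {γ lam ℓ} in
theorem operator_eq_zero_iff {F : ℂ → ℂ} (hF : Differentiable ℂ F) :
    operator γ lam ℓ F = 0 ↔ ∀ n, recurrence γ lam ℓ (fun k ↦ iteratedDeriv k F 0) n = 0 := by
  simp only [← iteratedDeriv_operator_zero γ lam ℓ hF]
  refine ⟨fun h n ↦ by simp [h], fun h ↦ ?_⟩
  exact (differentiable_operator hF).eq_of_iteratedDeriv_eq (differentiable_const 0) 0
    fun n ↦ by simp [h n]

theorem eq_of_recurrence_eq_zero {s t : ℕ → ℂ} (hs : ∀ n, recurrence γ lam ℓ s n = 0)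
    (ht : ∀ n, recurrence γ lam ℓ t n = 0) (hst : ∀ n ≤ ℓ, s n = t n) : s = t := by
  funext n
  induction n using Nat.strong_induction_on with
  | _ n ih =>
    rcases le_or_gt n ℓ with hn | hn
    · exact hst n hn
    · have h := sub_eq_zero.2 ((hs n).trans (ht n).symm)
      simp only [recurrence, ih (n - 1) (by omega), ih (n - 2) (by omega)] at h
      exact sub_eq_zero.1 <| (mul_eq_zero.1 (by linear_combination h)).resolve_left
        (indicial_ne_zero ℓ hn)

theorem mul_norm_le_of_recurrence {t : ℕ → ℂ} (ht : ∀ n, recurrence γ lam ℓ t n = 0) {n : ℕ}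
    (hn : ℓ ≤ n) : (n + 2) * ‖t (n + 2) / (n + 2).factorial‖
      ≤ (2 * ‖γ‖ + ‖lam‖) * (‖t (n + 1) / (n + 1).factorial‖ + ‖t n / n.factorial‖) := by
  set c : ℕ → ℂ := fun k ↦ t k / k.factorial
  set D : ℂ := (((n + 2) * (n + 2 + 1) : ℕ) : ℂ) - ((ℓ * (ℓ + 1) : ℕ) : ℂ)
  have hc : D * c (n + 2) = -(2 * γ * c (n + 1) + lam * c n) := by
    have h := ht (n + 2)
    simp only [recurrence, Nat.add_sub_cancel, show n + 2 - 1 = n + 1 by omega] at h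
    simp only [c, D]
    rw [Nat.factorial_succ (n + 1), Nat.factorial_succ n]
    have hf : (n.factorial : ℂ) ≠ 0 := mod_cast n.factorial_ne_zero
    have h1 : (n : ℂ) + 1 ≠ 0 := mod_cast n.succ_ne_zero
    have h2 : (n : ℂ) + 1 + 1 ≠ 0 := mod_cast (n + 1).succ_ne_zero
    push_cast at h ⊢
    field_simp
    linear_combination h
  have hD : (n + 2 : ℝ) ≤ ‖D‖ := by
    refine le_trans ?_ (Complex.re_le_norm D)
    have : (ℓ : ℝ) ≤ n := mod_cast hn
    simp only [D, Complex.sub_re, Complex.natCast_re]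
    push_cast
    nlinarith
  calc (n + 2) * ‖c (n + 2)‖ ≤ ‖D‖ * ‖c (n + 2)‖ := by gcongr
    _ = ‖2 * γ * c (n + 1) + lam * c n‖ := by rw [← norm_mul, hc, norm_neg]
    _ ≤ 2 * ‖γ‖ * ‖c (n + 1)‖ + ‖lam‖ * ‖c n‖ := by
      refine (norm_add_le _ _).trans_eq ?_
      rw [norm_mul, norm_mul, norm_mul, Complex.norm_two]
    _ ≤ (2 * ‖γ‖ + ‖lam‖) * (‖c (n + 1)‖ + ‖c n‖) := by
      nlinarith [norm_nonneg γ, norm_nonneg lam, norm_nonneg (c n), norm_nonneg (c (n + 1))]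

theorem ofScalars_radius_eq_top_of_recurrence {t : ℕ → ℂ}
    (ht : ∀ n, recurrence γ lam ℓ t n = 0) :
    (ofScalars ℂ fun n ↦ t n / n.factorial).radius = ⊤ :=
  ofScalars_radius_eq_top_of_mul_norm_le _ (by positivity) ℓ fun _ hn ↦
    mul_norm_le_of_recurrence γ lam ℓ ht hn

noncomputable def regularDeriv : ℕ → ℂ
  | n =>
    if h : n ≤ ℓ then (if n = ℓ then (ℓ.factorial : ℂ) else 0)
    else -(2 * γ * n * regularDeriv (n - 1) + lam * ((n * (n - 1) : ℕ) : ℂ) * regularDeriv (n - 2))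
      / (((n * (n + 1) : ℕ) : ℂ) - ((ℓ * (ℓ + 1) : ℕ) : ℂ))
  decreasing_by all_goals omega

theorem regularDeriv_of_lt {n : ℕ} (h : n < ℓ) : regularDeriv γ lam ℓ n = 0 := by
  rw [regularDeriv]; simp [h.le, h.ne]

theorem regularDeriv_self : regularDeriv γ lam ℓ ℓ = ℓ.factorial := by
  rw [regularDeriv]; simp

theorem recurrence_regularDeriv (n : ℕ) : recurrence γ lam ℓ (regularDeriv γ lam ℓ) n = 0 := by
  rcases lt_trichotomy n ℓ with hn | rfl | hn
  · simp only [recurrence, regularDeriv_of_lt γ lam ℓ hn,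
      regularDeriv_of_lt γ lam ℓ (n := n - 1) (by omega),
      regularDeriv_of_lt γ lam ℓ (n := n - 2) (by omega)]
    ring
  · have h1 : (n : ℂ) * regularDeriv γ lam n (n - 1) = 0 := by
      rcases Nat.eq_zero_or_pos n with rfl | hn
      · simp
      · rw [regularDeriv_of_lt γ lam n (by omega), mul_zero]
    have h2 : ((n * (n - 1) : ℕ) : ℂ) * regularDeriv γ lam n (n - 2) = 0 := by
      rcases le_or_gt n 1 with hn | hn
      · rw [Nat.mul_eq_zero.2 (by omega), Nat.cast_zero, zero_mul]
      · rw [regularDeriv_of_lt γ lam n (by omega), mul_zero]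
    rw [recurrence, sub_self]
    linear_combination 2 * γ * h1 + lam * h2
  · have hD := indicial_ne_zero ℓ hn
    rw [recurrence, regularDeriv, dif_neg hn.not_ge]
    field_simp
    ring

end RadialSchrodinger

open RadialSchrodinger

theorem regular_solution_exists_unique_general (γ : ℝ) (lam : ℂ) (ℓ : ℕ) :
    ∃! F : ℂ → ℂ,
      Differentiable ℂ F ∧
      (∀ z : ℂ, z ^ 2 * deriv (deriv F) z + 2 * z * deriv F z
          - ((ℓ * (ℓ + 1) : ℕ) : ℂ) * F z + 2 * (γ : ℂ) * z * F z + lam * z ^ 2 * F z = 0) ∧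
      (∀ j : ℕ, j < ℓ → iteratedDeriv j F 0 = 0) ∧
      iteratedDeriv ℓ F 0 = (Nat.factorial ℓ : ℂ) := by
  obtain ⟨F, hF, hFt⟩ := exists_differentiable_iteratedDeriv_zero_eq _
    (ofScalars_radius_eq_top_of_recurrence _ _ _ (recurrence_regularDeriv γ lam ℓ))
  have hFrec : ∀ n, recurrence γ lam ℓ (fun k ↦ iteratedDeriv k F 0) n = 0 := fun n ↦ by
    simpa only [hFt] using recurrence_regularDeriv γ lam ℓ n
  refine ⟨F, ⟨hF, congrFun ((operator_eq_zero_iff hF).2 hFrec), fun j hj ↦ by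
    rw [hFt, regularDeriv_of_lt _ _ _ hj], by rw [hFt, regularDeriv_self]⟩, ?_⟩
  rintro G ⟨hG, hGeq, hG_lt, hG_self⟩
  have hGrec := (operator_eq_zero_iff hG).1 (funext hGeq : operator (γ : ℂ) lam ℓ G = 0)
  refine hG.eq_of_iteratedDeriv_eq hF 0 fun n ↦
    congrFun (eq_of_recurrence_eq_zero _ _ _ hGrec hFrec fun n hn ↦ ?_) n
  rcases hn.lt_or_eq with hn | rfl
  · rw [hG_lt n hn, hFt, regularDeriv_of_lt _ _ _ hn]
  · rw [hG_self, hFt, regularDeriv_self]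

/-- Existence and uniqueness of the regular solution `F_{ℓ,λ}` of the radial Schrödinger
equation: the unique entire function with `z²F'' + 2zF' − ℓ(ℓ+1)F + 2γzF + λz²F = 0`,
vanishing derivatives of order `< ℓ` at `0`, and `F^(ℓ)(0) = ℓ!`. -/
theorem regular_solution_exists_unique (γ : ℝ) (hγ : 0 < γ) (lam : ℂ) (ℓ : ℕ) :
    ∃! F : ℂ → ℂ,
      Differentiable ℂ F ∧
      (∀ z : ℂ, z ^ 2 * deriv (deriv F) z + 2 * z * deriv F z
          - ((ℓ * (ℓ + 1) : ℕ) : ℂ) * F z + 2 * (γ : ℂ) * z * F z + lam * z ^ 2 * F z = 0) ∧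
      (∀ j : ℕ, j < ℓ → iteratedDeriv j F 0 = 0) ∧
      iteratedDeriv ℓ F 0 = (Nat.factorial ℓ : ℂ) :=
  regular_solution_exists_unique_general γ lam ℓ
end

section
/- Let γ > 0, λ ∈ ℂ, ℓ ∈ ℕ, and let F : ℂ → ℂ be the regular solution: an entire function with z²F''(z) + 2zF'(z) − ℓ(ℓ+1)F(z) + 2γzF(z) + λz²F(z) = 0 for all z, F^(j)(0) = 0 for j < ℓ, and F^(ℓ)(0) = ℓ!. If ψ : (0,∞) → ℂ is a twice continuously differentiable solution of the radial Schrödinger equation on (0,∞) that is bounded on (0,1), then there exists c ∈ ℂ such that ψ(r) = c·F(r) for all r > 0; that is, the bounded-near-zero solutions are exactly the scalar multiples of the regular solution. -/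
/-!
Away from `r = 0` the equation `r² y'' + 2 r y' = V(r) y` is a regular linear ODE, so a solution
is determined by its value and derivative at any `r₀ > 0`. For two solutions the rescaled
Wronskian `r² (f g' - f' g)` is constant. If `f` is bounded near `0`, then `u = r² f'` has bounded
derivative `u' = V f`, and comparing `f` with `f + u(r)/t` on intervals `[a, 2a]`, `a → 0`, shows
`u(r) = O(r)`; hence `r² f' → 0`, and the Wronskian of two bounded solutions tends to `0`, so it
vanishes. The regular solution `F` is not identically zero on `(0, ∞)` because
`F^(ℓ)(0) = ℓ! ≠ 0`, so at a point `r₀` with `F r₀ ≠ 0` the solution `ψ` has the same Cauchy data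
as `(ψ r₀ / F r₀) • F`.
-/

open Set Filter Topology

theorem eqOn_Ioo_of_second_order_linear_ode {p q : ℝ → ℂ} {a b t₀ : ℝ}
    (hp : ContinuousOn p (Icc a b)) (hq : ContinuousOn q (Icc a b)) {f f' g g' : ℝ → ℂ}
    (hf : ∀ t ∈ Ioo a b, HasDerivAt f (f' t) t)
    (hf' : ∀ t ∈ Ioo a b, HasDerivAt f' (p t * f' t + q t * f t) t)
    (hg : ∀ t ∈ Ioo a b, HasDerivAt g (g' t) t)
    (hg' : ∀ t ∈ Ioo a b, HasDerivAt g' (p t * g' t + q t * g t) t)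
    (ht₀ : t₀ ∈ Ioo a b) (h₀ : f t₀ = g t₀) (h₁ : f' t₀ = g' t₀) :
    EqOn f g (Ioo a b) := by
  let A : ℝ → ℂ × ℂ →L[ℂ] ℂ × ℂ := fun t =>
    (ContinuousLinearMap.snd ℂ ℂ ℂ).prod
      (q t • ContinuousLinearMap.fst ℂ ℂ ℂ + p t • ContinuousLinearMap.snd ℂ ℂ ℂ)
  have hA : ContinuousOn A (Icc a b) :=
    (ContinuousLinearMap.prodₗᵢ ℂ).continuous.comp_continuousOn <| continuousOn_const.prodMk <|
      (hq.smul continuousOn_const).add (hp.smul continuousOn_const)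
  obtain ⟨K, hK⟩ := isCompact_Icc.exists_bound_of_continuousOn hA
  have hsol : ∀ {u u' : ℝ → ℂ}, (∀ t ∈ Ioo a b, HasDerivAt u (u' t) t) →
      (∀ t ∈ Ioo a b, HasDerivAt u' (p t * u' t + q t * u t) t) →
      ∀ t ∈ Ioo a b, HasDerivAt (fun s => (u s, u' s)) (A t (u t, u' t)) t ∧ (u t, u' t) ∈ univ :=
    fun hu hu' t ht => ⟨by simpa [A, add_comm] using (hu t ht).prodMk (hu' t ht), mem_univ _⟩
  have hlip : ∀ t ∈ Ioo a b, LipschitzOnWith K.toNNReal (A t) univ := fun t ht =>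
    ((A t).lipschitz.weaken (by simpa [← NNReal.coe_le_coe] using
      (hK t (Ioo_subset_Icc_self ht)).trans (le_max_left K 0))).lipschitzOnWith
  exact fun t ht => congrArg Prod.fst <|
    ODE_solution_unique_of_mem_Ioo hlip ht₀ (hsol hf hf') (hsol hg hg') (by rw [h₀, h₁]) ht

section SqMulDerivEstimate

variable {f f' u' : ℝ → ℂ} {δ M K r : ℝ}

theorem norm_sq_mul_deriv_le_add
    (hf : ∀ t ∈ Ioo 0 δ, HasDerivAt f (f' t) t) (hfM : ∀ t ∈ Ioo 0 δ, ‖f t‖ ≤ M)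
    (hu : ∀ t ∈ Ioo 0 δ, HasDerivAt (fun t : ℝ => (t : ℂ) ^ 2 * f' t) (u' t) t)
    (hu'K : ∀ t ∈ Ioo 0 δ, ‖u' t‖ ≤ K) (hr : r ∈ Ioo 0 δ) {a : ℝ} (ha : a ∈ Ioo 0 (r / 2)) :
    ‖(r : ℂ) ^ 2 * f' r‖ ≤ 2 * K * r + 4 * M * a := by
  set u : ℝ → ℂ := fun t => (t : ℂ) ^ 2 * f' t
  have hIcc : Icc a (2 * a) ⊆ Ioo 0 δ := fun t ht =>
    ⟨ha.1.trans_le ht.1, by linarith [ht.2, ha.2, hr.2]⟩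
  let φ : ℝ → ℂ := fun t => f t + u r * ((t⁻¹ : ℝ) : ℂ)
  have hφ : ∀ t ∈ Icc a (2 * a), HasDerivAt φ ((u t - u r) / (t : ℂ) ^ 2) t := by
    intro t ht
    have ht0 : (t : ℂ) ≠ 0 := by exact_mod_cast (hIcc ht).1.ne'
    refine ((hf t (hIcc ht)).add
      (((hasDerivAt_inv (hIcc ht).1.ne').ofReal_comp).const_mul (u r))).congr_deriv ?_
    push_cast
    field_simp
    ring
  have hbound : ∀ t ∈ Icc a (2 * a), ‖(u t - u r) / (t : ℂ) ^ 2‖ ≤ K * r / a ^ 2 := by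
    intro t ht
    have hK : 0 ≤ K := (norm_nonneg _).trans (hu'K t (hIcc ht))
    have hlip : ‖u t - u r‖ ≤ K * ‖t - r‖ :=
      (convex_Ioo 0 δ).norm_image_sub_le_of_norm_hasDerivWithin_le
        (fun s hs => (hu s hs).hasDerivWithinAt) hu'K hr (hIcc ht)
    rw [norm_div, norm_pow, Complex.norm_real, Real.norm_of_nonneg (hIcc ht).1.le]
    refine div_le_div₀ (mul_nonneg hK hr.1.le) (hlip.trans ?_) (pow_pos ha.1 2)
      (pow_le_pow_left₀ ha.1.le ht.1 2)
    rw [Real.norm_eq_abs, abs_of_neg (by linarith [ht.2, ha.2])]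
    nlinarith [(hIcc ht).1]
  have hmvt := (convex_Icc a (2 * a)).norm_image_sub_le_of_norm_hasDerivWithin_le
    (fun t ht => (hφ t ht).hasDerivWithinAt) hbound
    (left_mem_Icc.2 (by linarith [ha.1])) (right_mem_Icc.2 (by linarith [ha.1]))
  have hidentity : u r = (2 * a : ℝ) * ((f (2 * a) - f a) - (φ (2 * a) - φ a)) := by
    have : (a : ℂ) ≠ 0 := by exact_mod_cast ha.1.ne'
    simp only [φ]
    push_cast
    field_simp
    ring
  have hf2a := hfM _ (hIcc (right_mem_Icc.2 (by linarith [ha.1])))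
  have hfa := hfM _ (hIcc (left_mem_Icc.2 (by linarith [ha.1])))
  calc ‖u r‖ ≤ 2 * a * (‖f (2 * a)‖ + ‖f a‖ + K * r / a ^ 2 * ‖2 * a - a‖) := by
        rw [hidentity, norm_mul, Complex.norm_real, Real.norm_of_nonneg (by linarith [ha.1])]
        exact mul_le_mul_of_nonneg_left
          ((norm_sub_le _ _).trans (add_le_add (norm_sub_le _ _) hmvt)) (by linarith [ha.1])
    _ ≤ 2 * a * (M + M + K * r / a ^ 2 * a) := by
        rw [show 2 * a - a = a by ring, Real.norm_of_nonneg ha.1.le]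
        gcongr
        linarith [ha.1]
    _ = 2 * K * r + 4 * M * a := by
        field_simp [ha.1.ne']
        ring

theorem norm_sq_mul_deriv_le
    (hf : ∀ t ∈ Ioo 0 δ, HasDerivAt f (f' t) t) (hfM : ∀ t ∈ Ioo 0 δ, ‖f t‖ ≤ M)
    (hu : ∀ t ∈ Ioo 0 δ, HasDerivAt (fun t : ℝ => (t : ℂ) ^ 2 * f' t) (u' t) t)
    (hu'K : ∀ t ∈ Ioo 0 δ, ‖u' t‖ ≤ K) (hr : r ∈ Ioo 0 δ) :
    ‖(r : ℂ) ^ 2 * f' r‖ ≤ 2 * K * r := by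
  have hlim : Tendsto (fun a : ℝ => 2 * K * r + 4 * M * a) (𝓝[>] 0) (𝓝 (2 * K * r)) :=
    ((continuous_const.add (continuous_const.mul continuous_id)).tendsto' _ _ (by simp)).mono_left
      nhdsWithin_le_nhds
  exact ge_of_tendsto hlim <| eventually_of_mem (Ioo_mem_nhdsGT (half_pos hr.1)) fun _ ha =>
    norm_sq_mul_deriv_le_add hf hfM hu hu'K hr ha

end SqMulDerivEstimate

def IsRadialSolution (V f f' f'' : ℝ → ℂ) : Prop :=
  ∀ r : ℝ, 0 < r → HasDerivAt f (f' r) r ∧ HasDerivAt f' (f'' r) r ∧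
    (r : ℂ) ^ 2 * f'' r + 2 * r * f' r = V r * f r

def radialWronskian (f f' g g' : ℝ → ℂ) (r : ℝ) : ℂ :=
  f r * ((r : ℂ) ^ 2 * g' r) - (r : ℂ) ^ 2 * f' r * g r

namespace IsRadialSolution

variable {V f f' f'' g g' g'' : ℝ → ℂ}

theorem const_mul (hf : IsRadialSolution V f f' f'') (c : ℂ) :
    IsRadialSolution V (fun r => c * f r) (fun r => c * f' r) (fun r => c * f'' r) :=
  fun r hr => by
    obtain ⟨h₁, h₂, heq⟩ := hf r hr
    exact ⟨h₁.const_mul c, h₂.const_mul c, by linear_combination c * heq⟩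

theorem hasDerivAt_deriv (hf : IsRadialSolution V f f' f'') {r : ℝ} (hr : 0 < r) :
    HasDerivAt f' (-2 / (r : ℂ) * f' r + V r / (r : ℂ) ^ 2 * f r) r := by
  obtain ⟨-, h₂, heq⟩ := hf r hr
  convert h₂ using 1
  have : (r : ℂ) ≠ 0 := by exact_mod_cast hr.ne'
  field_simp
  linear_combination -heq

theorem eqOn (hV : ContinuousOn V (Ioi 0)) (hf : IsRadialSolution V f f' f'')
    (hg : IsRadialSolution V g g' g'') {r₀ : ℝ} (hr₀ : 0 < r₀) (h₀ : f r₀ = g r₀)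
    (h₁ : f' r₀ = g' r₀) : EqOn f g (Ioi 0) := by
  intro r (hr : 0 < r)
  have hsub : Icc (min r r₀ / 2) (max r r₀ + 1) ⊆ Ioi 0 := fun t ht =>
    lt_of_lt_of_le (by positivity) ht.1
  have hmem : ∀ {t}, 0 < t → t ≤ max r r₀ → min r r₀ ≤ t →
      t ∈ Ioo (min r r₀ / 2) (max r r₀ + 1) :=
    fun ht h₁ h₂ => ⟨by linarith, by linarith⟩
  have hne : ∀ t ∈ Icc (min r r₀ / 2) (max r r₀ + 1), (t : ℂ) ≠ 0 := fun t ht => by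
    exact_mod_cast (hsub ht).ne'
  refine eqOn_Ioo_of_second_order_linear_ode (p := fun t => -2 / (t : ℂ))
    (q := fun t => V t / (t : ℂ) ^ 2) ?_ ?_ (fun t ht => (hf t (hsub (Ioo_subset_Icc_self ht))).1)
    (fun t ht => hf.hasDerivAt_deriv (hsub (Ioo_subset_Icc_self ht)))
    (fun t ht => (hg t (hsub (Ioo_subset_Icc_self ht))).1)
    (fun t ht => hg.hasDerivAt_deriv (hsub (Ioo_subset_Icc_self ht)))
    (hmem hr₀ (le_max_right _ _) (min_le_right _ _)) h₀ h₁
    (hmem hr (le_max_left _ _) (min_le_left _ _))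
  · exact continuousOn_const.div (by fun_prop) hne
  · exact (hV.mono hsub).div (by fun_prop) fun t ht => pow_ne_zero 2 (hne t ht)

theorem hasDerivAt_sq_mul_deriv (hf : IsRadialSolution V f f' f'') {r : ℝ} (hr : 0 < r) :
    HasDerivAt (fun r : ℝ => (r : ℂ) ^ 2 * f' r) (V r * f r) r := by
  obtain ⟨-, h₂, heq⟩ := hf r hr
  have hsq : HasDerivAt (fun z : ℂ => z ^ 2) (2 * r) r := by simpa using hasDerivAt_pow 2 (r : ℂ)
  exact (hsq.comp_ofReal.mul h₂).congr_deriv (by linear_combination heq)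

theorem hasDerivAt_radialWronskian (hf : IsRadialSolution V f f' f'')
    (hg : IsRadialSolution V g g' g'') {r : ℝ} (hr : 0 < r) :
    HasDerivAt (radialWronskian f f' g g') 0 r :=
  (((hf r hr).1.mul (hg.hasDerivAt_sq_mul_deriv hr)).sub
    ((hf.hasDerivAt_sq_mul_deriv hr).mul (hg r hr).1)).congr_deriv (by ring)

theorem radialWronskian_eq (hf : IsRadialSolution V f f' f'')
    (hg : IsRadialSolution V g g' g'') {r s : ℝ} (hr : 0 < r) (hs : 0 < s) :
    radialWronskian f f' g g' r = radialWronskian f f' g g' s :=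
  isOpen_Ioi.is_const_of_deriv_eq_zero isPreconnected_Ioi
    (fun _ ht => (hf.hasDerivAt_radialWronskian hg ht).differentiableAt.differentiableWithinAt)
    (fun _ ht => (hf.hasDerivAt_radialWronskian hg ht).deriv) hr hs

theorem tendsto_sq_mul_deriv (hV : IsBoundedUnder (· ≤ ·) (𝓝[>] 0) fun r => ‖V r‖)
    (hf : IsRadialSolution V f f' f'') (hfb : IsBoundedUnder (· ≤ ·) (𝓝[>] 0) fun r => ‖f r‖) :
    Tendsto (fun r : ℝ => (r : ℂ) ^ 2 * f' r) (𝓝[>] 0) (𝓝 0) := by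
  obtain ⟨B, hB⟩ := hV
  obtain ⟨M, hM⟩ := hfb
  obtain ⟨δ, hδ, hbound⟩ := (nhdsGT_basis (0 : ℝ)).eventually_iff.1
    ((eventually_map.1 hB).and (eventually_map.1 hM))
  have hle : ∀ r ∈ Ioo 0 δ, ‖(r : ℂ) ^ 2 * f' r‖ ≤ 2 * (B * M) * r := fun r hr =>
    norm_sq_mul_deriv_le (fun t ht => (hf t ht.1).1) (fun t ht => (hbound ht).2)
      (fun t ht => hf.hasDerivAt_sq_mul_deriv ht.1)
      (fun t ht => by
        rw [norm_mul]
        exact mul_le_mul (hbound ht).1 (hbound ht).2 (norm_nonneg _)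
          ((norm_nonneg _).trans (hbound ht).1)) hr
  refine squeeze_zero_norm' (eventually_of_mem (Ioo_mem_nhdsGT hδ) hle) ?_
  exact ((continuous_const_mul _).tendsto' _ _ (mul_zero _)).mono_left nhdsWithin_le_nhds

theorem radialWronskian_eq_zero (hV : IsBoundedUnder (· ≤ ·) (𝓝[>] 0) fun r => ‖V r‖)
    (hf : IsRadialSolution V f f' f'') (hg : IsRadialSolution V g g' g'')
    (hfb : IsBoundedUnder (· ≤ ·) (𝓝[>] 0) fun r => ‖f r‖)
    (hgb : IsBoundedUnder (· ≤ ·) (𝓝[>] 0) fun r => ‖g r‖) {r : ℝ} (hr : 0 < r) :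
    radialWronskian f f' g g' r = 0 := by
  have hzero : Tendsto (radialWronskian f f' g g') (𝓝[>] 0) (𝓝 0) := by
    have := (isBoundedUnder_le_mul_tendsto_zero hfb (hg.tendsto_sq_mul_deriv hV hgb)).sub
      ((hf.tendsto_sq_mul_deriv hV hfb).zero_mul_isBoundedUnder_le hgb)
    rwa [sub_zero] at this
  have hconst : Tendsto (radialWronskian f f' g g') (𝓝[>] 0) (𝓝 (radialWronskian f f' g g' r)) :=
    tendsto_const_nhds.congr' <| eventually_mem_nhdsWithin.mono fun s hs =>
      hf.radialWronskian_eq hg hr hs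
  exact tendsto_nhds_unique hconst hzero

theorem exists_eq_const_mul (hV : ContinuousOn V (Ici 0)) (hf : IsRadialSolution V f f' f'')
    (hg : IsRadialSolution V g g' g'') (hfb : IsBoundedUnder (· ≤ ·) (𝓝[>] 0) fun r => ‖f r‖)
    (hgb : IsBoundedUnder (· ≤ ·) (𝓝[>] 0) fun r => ‖g r‖) {r₀ : ℝ} (hr₀ : 0 < r₀)
    (hgr₀ : g r₀ ≠ 0) : ∃ c : ℂ, ∀ r : ℝ, 0 < r → f r = c * g r := by
  have hVb : IsBoundedUnder (· ≤ ·) (𝓝[>] 0) fun r => ‖V r‖ :=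
    ((hV 0 self_mem_Ici).tendsto.mono_left (nhdsWithin_mono _ Ioi_subset_Ici_self)).norm
      |>.isBoundedUnder_le
  have hr₀' : (r₀ : ℂ) ≠ 0 := by exact_mod_cast hr₀.ne'
  have hW : f' r₀ * g r₀ - f r₀ * g' r₀ = 0 := by
    have hW₀ := hf.radialWronskian_eq_zero hVb hg hfb hgb hr₀
    unfold radialWronskian at hW₀
    refine (mul_eq_zero.1 ?_).resolve_left (pow_ne_zero 2 hr₀')
    linear_combination -hW₀
  refine ⟨f r₀ / g r₀, fun r hr =>
    hf.eqOn (hV.mono Ioi_subset_Ici_self) (hg.const_mul (f r₀ / g r₀)) hr₀ ?_ ?_ hr⟩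
  · field_simp
  · field_simp
    linear_combination hW

end IsRadialSolution

theorem exists_pos_ne_zero_of_iteratedDeriv_ne_zero {F : ℂ → ℂ} (hF : AnalyticAt ℂ F 0) {n : ℕ}
    (hn : iteratedDeriv n F 0 ≠ 0) : ∃ r : ℝ, 0 < r ∧ F r ≠ 0 := by
  by_contra! hzero
  have hofReal : Tendsto (fun r : ℝ => (r : ℂ)) (𝓝[>] 0) (𝓝[≠] 0) :=
    tendsto_nhdsWithin_iff.2 ⟨(Complex.continuous_ofReal.tendsto' 0 0 (by simp)).mono_left
      nhdsWithin_le_nhds, eventually_mem_nhdsWithin.mono fun r hr => by simpa using hr.ne'⟩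
  have hreal : ∀ᶠ r : ℝ in 𝓝[>] 0, F r = 0 := eventually_mem_nhdsWithin.mono hzero
  have hfreq : ∃ᶠ z in 𝓝[≠] 0, F z = 0 := hofReal.frequently hreal.frequently
  have hev : F =ᶠ[𝓝 0] 0 := hF.frequently_zero_iff_eventually_zero.1 hfreq
  apply hn
  simpa using hev.iteratedDeriv_eq n

theorem bounded_solution_is_multiple_of_regular_general (γ : ℝ) (lam : ℂ) (ℓ : ℕ)
    (F : ℂ → ℂ) (hF : Differentiable ℂ F)
    (hFeq : ∀ z : ℂ, z ^ 2 * deriv (deriv F) z + 2 * z * deriv F z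
        - ((ℓ * (ℓ + 1) : ℕ) : ℂ) * F z + 2 * (γ : ℂ) * z * F z + lam * z ^ 2 * F z = 0)
    (hFl : iteratedDeriv ℓ F 0 = (Nat.factorial ℓ : ℂ))
    (ψ ψ' ψ'' : ℝ → ℂ)
    (hψ1 : ∀ r : ℝ, 0 < r → HasDerivAt ψ (ψ' r) r)
    (hψ2 : ∀ r : ℝ, 0 < r → HasDerivAt ψ' (ψ'' r) r)
    (hψeq : ∀ r : ℝ, 0 < r → (r : ℂ) ^ 2 * ψ'' r + 2 * (r : ℂ) * ψ' r
        - ((ℓ * (ℓ + 1) : ℕ) : ℂ) * ψ r + 2 * (γ : ℂ) * (r : ℂ) * ψ r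
        + lam * (r : ℂ) ^ 2 * ψ r = 0)
    (hbd : ∃ M : ℝ, ∀ r : ℝ, 0 < r → r < 1 → ‖ψ r‖ ≤ M) :
    ∃ c : ℂ, ∀ r : ℝ, 0 < r → ψ r = c * F (r : ℂ) := by
  let V : ℝ → ℂ := fun r => ((ℓ * (ℓ + 1) : ℕ) : ℂ) - 2 * γ * r - lam * (r : ℂ) ^ 2
  have hV : ContinuousOn V (Ici 0) := by fun_prop
  have hψ : IsRadialSolution V ψ ψ' ψ'' := fun r hr =>
    ⟨hψ1 r hr, hψ2 r hr, by linear_combination hψeq r hr⟩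
  have hFsol : IsRadialSolution V (fun r => F r) (fun r => deriv F r)
      (fun r => deriv (deriv F) r) := fun r _ =>
    ⟨(hF r).hasDerivAt.comp_ofReal, (hF.deriv r).hasDerivAt.comp_ofReal,
      by linear_combination hFeq r⟩
  have hψb : IsBoundedUnder (· ≤ ·) (𝓝[>] 0) fun r => ‖ψ r‖ := by
    obtain ⟨M, hM⟩ := hbd
    exact ⟨M, eventually_map.2 <|
      eventually_of_mem (Ioo_mem_nhdsGT one_pos) fun r hr => hM r hr.1 hr.2⟩
  have hFb : IsBoundedUnder (· ≤ ·) (𝓝[>] 0) fun r : ℝ => ‖F r‖ :=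
    ((hF.continuous.comp Complex.continuous_ofReal).tendsto 0).norm.isBoundedUnder_le.mono
      nhdsWithin_le_nhds
  obtain ⟨r₀, hr₀, hFr₀⟩ := exists_pos_ne_zero_of_iteratedDeriv_ne_zero (hF.analyticAt 0)
    (hFl ▸ Nat.cast_ne_zero.2 ℓ.factorial_ne_zero)
  exact hψ.exists_eq_const_mul hV hFsol hψb hFb hr₀ hFr₀

/-- A solution of the radial Schrödinger equation on `(0,∞)` that is bounded near zero is a
scalar multiple of the regular solution `F_{ℓ,λ}`. -/
theorem bounded_solution_is_multiple_of_regular (γ : ℝ) (hγ : 0 < γ) (lam : ℂ) (ℓ : ℕ)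
    (F : ℂ → ℂ) (hF : Differentiable ℂ F)
    (hFeq : ∀ z : ℂ, z ^ 2 * deriv (deriv F) z + 2 * z * deriv F z
        - ((ℓ * (ℓ + 1) : ℕ) : ℂ) * F z + 2 * (γ : ℂ) * z * F z + lam * z ^ 2 * F z = 0)
    (hFj : ∀ j : ℕ, j < ℓ → iteratedDeriv j F 0 = 0)
    (hFl : iteratedDeriv ℓ F 0 = (Nat.factorial ℓ : ℂ))
    (ψ ψ' ψ'' : ℝ → ℂ)
    (hψ1 : ∀ r : ℝ, 0 < r → HasDerivAt ψ (ψ' r) r)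
    (hψ2 : ∀ r : ℝ, 0 < r → HasDerivAt ψ' (ψ'' r) r)
    (hψc : ContinuousOn ψ'' (Set.Ioi 0))
    (hψeq : ∀ r : ℝ, 0 < r → (r : ℂ) ^ 2 * ψ'' r + 2 * (r : ℂ) * ψ' r
        - ((ℓ * (ℓ + 1) : ℕ) : ℂ) * ψ r + 2 * (γ : ℂ) * (r : ℂ) * ψ r
        + lam * (r : ℂ) ^ 2 * ψ r = 0)
    (hbd : ∃ M : ℝ, ∀ r : ℝ, 0 < r → r < 1 → ‖ψ r‖ ≤ M) :
    ∃ c : ℂ, ∀ r : ℝ, 0 < r → ψ r = c * F (r : ℂ) :=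
  bounded_solution_is_multiple_of_regular_general γ lam ℓ F hF hFeq hFl ψ ψ' ψ'' hψ1 hψ2 hψeq hbd
end
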